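/- arXiv:2302.02560 — 10 statements merged into one kernel-verified Lean document; each statement's English description precedes it below -/
import Mathlib

section
/- Let (Ω, 𝓕, P) be a probability space with random variables X: Ω → ℝ^d, A, Ã: Ω → ℝ, Y: Ω → ℝ, with Y integrable. Let μ: ℝ^d × ℝ → ℝ be measurable such that μ(X, A) is a version of E[Y | σ(X, A)]. Let ρ be the law of X and κ, ν Markov kernels with law(X, A) = ρ ⊗ κ and law(X, Ã) = ρ ⊗ ν, and let w: ℝ^d × ℝ → ℝ be jointly measurable and nonnegative with, for ρ-a.e. x, ν(x) absolutely continuous with respect to κ(x) with density w(x, ·). Let ŵ, μ̂: ℝ^d × ℝ → ℝ be measurable with ŵ(X,A), μ̂(X,A), μ(X,A), w(X,A) essentially bounded and all displayed expectations finite, and set ψ = E[μ(X, Ã)]. Then E[ŵ(X, A)(Y − μ̂(X, A)) + μ̂(X, Ã) − ψ] = E[(ŵ(X, A) − w(X, A))·(μ(X, A) − μ̂(X, A))]. -/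
/-!
Expanding `(ŵ - w)(μ - μ̂)`, the identity reduces to three moment equations. The tower property
gives `E[ŵ(X, A) Y] = E[ŵ(X, A) μ(X, A)]`, as `ŵ(X, A)` is `σ(X, A)`-measurable. Since
`ρ ⊗ ν = (ρ ⊗ κ).withDensity w`, the law of `(X, Ã)` has density `w` with respect to that of
`(X, A)`, so `E[g(X, Ã)] = E[w(X, A) g(X, A)]` for `g = μ` and `g = μ̂`.
-/

open MeasureTheory ProbabilityTheory
open scoped NNReal ENNReal

namespace MeasureTheory

variable {Ω α : Type*} {mΩ : MeasurableSpace Ω} {mα : MeasurableSpace α} {P : Measure Ω}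

lemma integral_mul_condExp_of_stronglyMeasurable {m : MeasurableSpace Ω} (hm : m ≤ mΩ)
    [SigmaFinite (P.trim hm)] {f g : Ω → ℝ} (hf : StronglyMeasurable[m] f)
    (hfg : Integrable (fun ω => f ω * g ω) P) (hg : Integrable g P) :
    ∫ ω, f ω * g ω ∂P = ∫ ω, f ω * P[g | m] ω ∂P :=
  calc ∫ ω, f ω * g ω ∂P = ∫ ω, P[f * g | m] ω ∂P := (integral_condExp hm).symm
    _ = ∫ ω, f ω * P[g | m] ω ∂P :=
      integral_congr_ae (condExp_mul_of_stronglyMeasurable_left hf hfg hg)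

lemma integral_comp_mul_of_ae_eq_condExp [IsFiniteMeasure P] {Z : Ω → α} (hZ : Measurable Z)
    {Y : Ω → ℝ} (hY : Integrable Y P) {f g : α → ℝ} (hf : Measurable f)
    (hfY : Integrable (fun ω => f (Z ω) * Y ω) P)
    (hg : (fun ω => g (Z ω)) =ᵐ[P] P[Y | mα.comap Z]) :
    ∫ ω, f (Z ω) * Y ω ∂P = ∫ ω, f (Z ω) * g (Z ω) ∂P :=
  (integral_mul_condExp_of_stronglyMeasurable hZ.comap_le
    (hf.comp (comap_measurable Z)).stronglyMeasurable hfY hY).trans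
    (integral_congr_ae (hg.mono fun ω hω => congrArg (f (Z ω) * ·) hω.symm))

lemma Measure.compProd_eq_withDensity_of_ae_eq {β : Type*} {mβ : MeasurableSpace β}
    {ρ : Measure α} [SFinite ρ] {κ ν : Kernel α β} [IsSFiniteKernel κ] [IsSFiniteKernel ν]
    {f : α → β → ℝ≥0} (hf : Measurable (Function.uncurry f))
    (h : ∀ᵐ x ∂ρ, ν x = (κ x).withDensity (fun b => f x b)) :
    ρ ⊗ₘ ν = (ρ ⊗ₘ κ).withDensity (fun p => f p.1 p.2) := by
  have hf' : Measurable (Function.uncurry fun x b => (f x b : ℝ≥0∞)) :=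
    measurable_coe_nnreal_ennreal.comp hf
  rw [← Measure.compProd_withDensity hf']
  refine Measure.compProd_congr (h.mono fun x hx => ?_)
  rw [hx, Kernel.withDensity_apply _ hf']

variable {E : Type*} [NormedAddCommGroup E] [NormedSpace ℝ E] {Z Z' : Ω → α} {v : α → ℝ}

lemma integral_comp_of_map_eq_withDensity
    (h : P.map Z' = (P.map Z).withDensity (fun p => ENNReal.ofReal (v p)))
    (hZ : Measurable Z) (hZ' : Measurable Z') (hv : Measurable v) (hv0 : ∀ p, 0 ≤ v p)
    {g : α → E} (hg : StronglyMeasurable g) :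
    ∫ ω, g (Z' ω) ∂P = ∫ ω, v (Z ω) • g (Z ω) ∂P := by
  rw [← integral_map hZ'.aemeasurable hg.aestronglyMeasurable, h,
    integral_withDensity_eq_integral_toReal_smul hv.ennreal_ofReal
      (ae_of_all _ fun _ => ENNReal.ofReal_lt_top)]
  simp only [ENNReal.toReal_ofReal (hv0 _)]
  exact integral_map hZ.aemeasurable (hv.stronglyMeasurable.smul hg).aestronglyMeasurable

lemma integrable_comp_iff_of_map_eq_withDensity
    (h : P.map Z' = (P.map Z).withDensity (fun p => ENNReal.ofReal (v p)))
    (hZ : Measurable Z) (hZ' : Measurable Z') (hv : Measurable v) (hv0 : ∀ p, 0 ≤ v p)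
    {g : α → E} (hg : StronglyMeasurable g) :
    Integrable (fun ω => g (Z' ω)) P ↔ Integrable (fun ω => v (Z ω) • g (Z ω)) P := by
  refine (integrable_map_measure hg.aestronglyMeasurable hZ'.aemeasurable).symm.trans ?_
  rw [h,
    integrable_withDensity_iff_integrable_smul' hv.ennreal_ofReal
      (ae_of_all _ fun _ => ENNReal.ofReal_lt_top)]
  simp only [ENNReal.toReal_ofReal (hv0 _)]
  exact integrable_map_measure (hv.stronglyMeasurable.smul hg).aestronglyMeasurable
    hZ.aemeasurable

lemma integral_mul_sub_add_sub_integral_eq_integral_sub_mul_sub [IsProbabilityMeasure P]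
    {W R Y M M' S S' : Ω → ℝ} {CW CR : ℝ}
    (hW : AEStronglyMeasurable W P) (hWC : ∀ᵐ ω ∂P, |W ω| ≤ CW)
    (hR : AEStronglyMeasurable R P) (hRC : ∀ᵐ ω ∂P, |R ω| ≤ CR)
    (hY : Integrable Y P) (hM : Integrable M P) (hM' : Integrable M' P)
    (hS' : Integrable S' P) (hWY : ∫ ω, W ω * Y ω ∂P = ∫ ω, W ω * M ω ∂P)
    (hS_eq : ∫ ω, S ω ∂P = ∫ ω, R ω * M ω ∂P) (hS'_eq : ∫ ω, S' ω ∂P = ∫ ω, R ω * M' ω ∂P) :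
    ∫ ω, (W ω * (Y ω - M' ω) + S' ω - ∫ ω', S ω' ∂P) ∂P
      = ∫ ω, (W ω - R ω) * (M ω - M' ω) ∂P := by
  have hWY_int := hY.bdd_mul hW hWC
  have hWM_int := hM.bdd_mul hW hWC
  have hWM'_int := hM'.bdd_mul hW hWC
  have hRM_int := hM.bdd_mul hR hRC
  have hRM'_int := hM'.bdd_mul hR hRC
  have hW_eq : ∫ ω, W ω * (Y ω - M' ω) ∂P = ∫ ω, W ω * (M ω - M' ω) ∂P := by
    simp only [mul_sub]
    rw [integral_sub hWY_int hWM'_int, integral_sub hWM_int hWM'_int, hWY]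
  have hR_eq : ∫ ω, S' ω ∂P - ∫ ω, S ω ∂P = -∫ ω, R ω * (M ω - M' ω) ∂P := by
    simp only [mul_sub]
    rw [integral_sub hRM_int hRM'_int, hS_eq, hS'_eq]
    ring
  have hWYM' : Integrable (fun ω => W ω * (Y ω - M' ω)) P := (hY.sub hM').bdd_mul hW hWC
  have hWMM' : Integrable (fun ω => W ω * (M ω - M' ω)) P := (hM.sub hM').bdd_mul hW hWC
  have hRMM' : Integrable (fun ω => R ω * (M ω - M' ω)) P := (hM.sub hM').bdd_mul hR hRC
  calc _ = ∫ ω, W ω * (Y ω - M' ω) ∂P + (∫ ω, S' ω ∂P - ∫ ω, S ω ∂P) := by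
        rw [integral_sub (f := fun ω => W ω * (Y ω - M' ω) + S' ω) (hWYM'.add hS')
          (integrable_const _), integral_add hWYM' hS', integral_const, probReal_univ, one_smul]
        ring
    _ = ∫ ω, W ω * (M ω - M' ω) ∂P - ∫ ω, R ω * (M ω - M' ω) ∂P := by
        rw [hW_eq, hR_eq, sub_eq_add_neg]
    _ = _ := by
        rw [← integral_sub hWMM' hRMM']
        congr 1 with ω
        ring

end MeasureTheory

theorem srf_eif_mean_identity_general
    {Ω : Type*} [MeasurableSpace Ω] (P : Measure Ω) [IsProbabilityMeasure P]
    {d : ℕ} (X : Ω → (Fin d → ℝ)) (A Atil : Ω → ℝ) (Y : Ω → ℝ)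
    (hX : Measurable X) (hA : Measurable A) (hAtil : Measurable Atil)
    (hYint : Integrable Y P)
    -- `μ(X, A)` is a version of `E[Y | σ(X, A)]`
    (μ : (Fin d → ℝ) → ℝ → ℝ) (hμ : Measurable (Function.uncurry μ))
    (hμver : (fun ω => μ (X ω) (A ω)) =ᵐ[P]
      P[Y | MeasurableSpace.comap (fun ω => (X ω, A ω)) inferInstance])
    -- `w(x, ·)` is the density of the conditional law of `Ã` given `X = x` with respect to
    -- the conditional law of `A` given `X = x`
    (κ ν : Kernel (Fin d → ℝ) ℝ) [IsMarkovKernel κ] [IsMarkovKernel ν]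
    (hκ : Measure.map (fun ω => (X ω, A ω)) P = (Measure.map X P).compProd κ)
    (hν : Measure.map (fun ω => (X ω, Atil ω)) P = (Measure.map X P).compProd ν)
    (w : (Fin d → ℝ) → ℝ → ℝ) (hw : Measurable (Function.uncurry w))
    (hwnn : ∀ x a, 0 ≤ w x a)
    (hac : ∀ᵐ x ∂(Measure.map X P),
      ν x = (κ x).withDensity (fun a => ENNReal.ofReal (w x a)))
    -- candidate nuisance estimators
    (what μhat : (Fin d → ℝ) → ℝ → ℝ)
    (hwhat : Measurable (Function.uncurry what))
    (hμhat : Measurable (Function.uncurry μhat))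
    -- essential boundedness
    (hwhat_bdd : ∃ C : ℝ, ∀ᵐ ω ∂P, |what (X ω) (A ω)| ≤ C)
    (hμhat_bdd : ∃ C : ℝ, ∀ᵐ ω ∂P, |μhat (X ω) (A ω)| ≤ C)
    (hw_bdd : ∃ C : ℝ, ∀ᵐ ω ∂P, |w (X ω) (A ω)| ≤ C) :
    ∫ ω, (what (X ω) (A ω) * (Y ω - μhat (X ω) (A ω)) + μhat (X ω) (Atil ω)
        - ∫ ω', μ (X ω') (Atil ω') ∂P) ∂P
      = ∫ ω, (what (X ω) (A ω) - w (X ω) (A ω))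
          * (μ (X ω) (A ω) - μhat (X ω) (A ω)) ∂P := by
  obtain ⟨Cwhat, hwhatC⟩ := hwhat_bdd
  obtain ⟨Cμhat, hμhatC⟩ := hμhat_bdd
  obtain ⟨Cw, hwC⟩ := hw_bdd
  have hXA : Measurable fun ω => (X ω, A ω) := hX.prodMk hA
  have hXAtil : Measurable fun ω => (X ω, Atil ω) := hX.prodMk hAtil
  have hshift : P.map (fun ω => (X ω, Atil ω))
      = (P.map fun ω => (X ω, A ω)).withDensity fun p => ENNReal.ofReal (w p.1 p.2) := by
    rw [hν, hκ]
    exact Measure.compProd_eq_withDensity_of_ae_eq (f := fun x a => (w x a).toNNReal)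
      hw.real_toNNReal hac
  have hw0 : ∀ p : (Fin d → ℝ) × ℝ, 0 ≤ w p.1 p.2 := fun p => hwnn p.1 p.2
  have hW : AEStronglyMeasurable (fun ω => what (X ω) (A ω)) P :=
    (hwhat.comp hXA).aestronglyMeasurable
  have hR : AEStronglyMeasurable (fun ω => w (X ω) (A ω)) P :=
    (hw.comp hXA).aestronglyMeasurable
  have hμXA : Integrable (fun ω => μ (X ω) (A ω)) P := integrable_condExp.congr hμver.symm
  have hμhatXA : Integrable (fun ω => μhat (X ω) (A ω)) P :=
    .of_bound (hμhat.comp hXA).aestronglyMeasurable Cμhat hμhatC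
  have hμhatXAtil : Integrable (fun ω => μhat (X ω) (Atil ω)) P :=
    (integrable_comp_iff_of_map_eq_withDensity hshift hXA hXAtil hw hw0
      hμhat.stronglyMeasurable).2 (hμhatXA.bdd_mul hR hwC)
  have htower : ∫ ω, what (X ω) (A ω) * Y ω ∂P = ∫ ω, what (X ω) (A ω) * μ (X ω) (A ω) ∂P :=
    integral_comp_mul_of_ae_eq_condExp (g := Function.uncurry μ) hXA hYint hwhat
      (hYint.bdd_mul hW hwhatC) hμver
  have hshiftμ : ∫ ω, μ (X ω) (Atil ω) ∂P = ∫ ω, w (X ω) (A ω) * μ (X ω) (A ω) ∂P :=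
    integral_comp_of_map_eq_withDensity hshift hXA hXAtil hw hw0 hμ.stronglyMeasurable
  have hshiftμhat : ∫ ω, μhat (X ω) (Atil ω) ∂P = ∫ ω, w (X ω) (A ω) * μhat (X ω) (A ω) ∂P :=
    integral_comp_of_map_eq_withDensity hshift hXA hXAtil hw hw0 hμhat.stronglyMeasurable
  exact integral_mul_sub_add_sub_integral_eq_integral_sub_mul_sub hW hwhatC hR hwC hYint hμXA
    hμhatXA hμhatXAtil htower hshiftμ hshiftμhat

/-- Double-robustness identity (Proposition 1): the mean of the efficient influence function
`φ = ŵ(X, A)(Y − μ̂(X, A)) + μ̂(X, Ã) − ψ` at candidate nuisances `(μ̂, ŵ)` equals the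
expected product of the nuisance errors `E[(ŵ(X, A) − w(X, A))(μ(X, A) − μ̂(X, A))]`. -/
theorem srf_eif_mean_identity
    {Ω : Type*} [MeasurableSpace Ω] (P : Measure Ω) [IsProbabilityMeasure P]
    {d : ℕ} (X : Ω → (Fin d → ℝ)) (A Atil : Ω → ℝ) (Y : Ω → ℝ)
    (hX : Measurable X) (hA : Measurable A) (hAtil : Measurable Atil) (hY : Measurable Y)
    (hYint : Integrable Y P)
    -- `μ(X, A)` is a version of `E[Y | σ(X, A)]`
    (μ : (Fin d → ℝ) → ℝ → ℝ) (hμ : Measurable (Function.uncurry μ))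
    (hμver : (fun ω => μ (X ω) (A ω)) =ᵐ[P]
      P[Y | MeasurableSpace.comap (fun ω => (X ω, A ω)) inferInstance])
    -- `w(x, ·)` is the density of the conditional law of `Ã` given `X = x` with respect to
    -- the conditional law of `A` given `X = x`
    (κ ν : Kernel (Fin d → ℝ) ℝ) [IsMarkovKernel κ] [IsMarkovKernel ν]
    (hκ : Measure.map (fun ω => (X ω, A ω)) P = (Measure.map X P).compProd κ)
    (hν : Measure.map (fun ω => (X ω, Atil ω)) P = (Measure.map X P).compProd ν)
    (w : (Fin d → ℝ) → ℝ → ℝ) (hw : Measurable (Function.uncurry w))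
    (hwnn : ∀ x a, 0 ≤ w x a)
    (hac : ∀ᵐ x ∂(Measure.map X P),
      ν x = (κ x).withDensity (fun a => ENNReal.ofReal (w x a)))
    -- candidate nuisance estimators
    (what μhat : (Fin d → ℝ) → ℝ → ℝ)
    (hwhat : Measurable (Function.uncurry what))
    (hμhat : Measurable (Function.uncurry μhat))
    -- essential boundedness
    (hwhat_bdd : ∃ C : ℝ, ∀ᵐ ω ∂P, |what (X ω) (A ω)| ≤ C)
    (hμhat_bdd : ∃ C : ℝ, ∀ᵐ ω ∂P, |μhat (X ω) (A ω)| ≤ C)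
    (hμ_bdd : ∃ C : ℝ, ∀ᵐ ω ∂P, |μ (X ω) (A ω)| ≤ C)
    (hw_bdd : ∃ C : ℝ, ∀ᵐ ω ∂P, |w (X ω) (A ω)| ≤ C)
    -- all displayed expectations are finite
    (hμAtil_int : Integrable (fun ω => μ (X ω) (Atil ω)) P)
    (hμhatAtil_int : Integrable (fun ω => μhat (X ω) (Atil ω)) P)
    (hdeb_int : Integrable (fun ω => what (X ω) (A ω) * (Y ω - μhat (X ω) (A ω))) P)
    (hprod_int : Integrable (fun ω =>
      (what (X ω) (A ω) - w (X ω) (A ω)) * (μ (X ω) (A ω) - μhat (X ω) (A ω))) P) :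
    ∫ ω, (what (X ω) (A ω) * (Y ω - μhat (X ω) (A ω)) + μhat (X ω) (Atil ω)
        - ∫ ω', μ (X ω') (Atil ω') ∂P) ∂P
      = ∫ ω, (what (X ω) (A ω) - w (X ω) (A ω))
          * (μ (X ω) (A ω) - μhat (X ω) (A ω)) ∂P :=
  srf_eif_mean_identity_general P X A Atil Y hX hA hAtil hYint μ hμ hμver κ ν hκ hν w hw hwnn hac
    what μhat hwhat hμhat hwhat_bdd hμhat_bdd hw_bdd
end

section
/- In the setting of the double-robustness identity — a probability space with X: Ω → ℝ^d, A, Ã: Ω → ℝ, Y integrable; μ(X, A) a version of E[Y | σ(X, A)]; w(x,·) the density of the conditional law of Ã given X = x with respect to the conditional law of A given X = x; ŵ, μ̂ measurable with all relevant quantities essentially bounded and integrable; ψ = E[μ(X, Ã)] — if either μ̂(X, A) = μ(X, A) almost surely, or ŵ(X, A) = w(X, A) almost surely, then E[ŵ(X, A)(Y − μ̂(X, A)) + μ̂(X, Ã) − ψ] = 0. -/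
open MeasureTheory ProbabilityTheory

/-!
Conditioning on `(X, A)` replaces `Y` by `μ(X, A)` in the debiasing term, and the density ratio
`w` turns the expectation of `μ(X, Ã) - μ̂(X, Ã)` into that of `w(X, A) (μ - μ̂)(X, A)`. Hence
`E[φ] = E[(ŵ - w)(X, A) (μ - μ̂)(X, A)]`, and the integrand vanishes almost surely as soon as
one of the two nuisances is correctly specified.
-/

section DensityRatio

variable {α β : Type*} [MeasurableSpace α] [MeasurableSpace β]

lemma integral_compProd_eq_integral_mul_of_withDensity {μ : Measure α} [SFinite μ]
    {κ ν : Kernel α β} [IsSFiniteKernel κ] [IsSFiniteKernel ν]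
    {w : α → β → ℝ} (hw : Measurable (Function.uncurry w)) (hwnn : ∀ x a, 0 ≤ w x a)
    (hac : ∀ᵐ x ∂μ, ν x = (κ x).withDensity (fun a => ENNReal.ofReal (w x a)))
    (g : α × β → ℝ) :
    ∫ p, g p ∂(μ ⊗ₘ ν) = ∫ p, w p.1 p.2 * g p ∂(μ ⊗ₘ κ) := by
  have hdens : Measurable (Function.uncurry fun x a => ENNReal.ofReal (w x a)) :=
    ENNReal.measurable_ofReal.comp hw
  have := Kernel.IsSFiniteKernel.withDensity κ fun x a => (ENNReal.ofReal_ne_top (r := w x a))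
  have hν : μ ⊗ₘ ν = (μ ⊗ₘ κ).withDensity (fun p => ENNReal.ofReal (w p.1 p.2)) := by
    rw [← Measure.compProd_withDensity hdens]
    refine Measure.compProd_congr ?_
    filter_upwards [hac] with x hx
    rw [hx, Kernel.withDensity_apply _ hdens]
  rw [hν, integral_withDensity_eq_integral_toReal_smul
    (f := fun p : α × β => ENNReal.ofReal (w p.1 p.2)) hdens
    (.of_forall fun _ => ENNReal.ofReal_lt_top)]
  simp only [ENNReal.toReal_ofReal (hwnn _ _), smul_eq_mul]

lemma integral_comp_eq_integral_mul_of_withDensity {Ω : Type*} [MeasurableSpace Ω]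
    {P : Measure Ω} [IsFiniteMeasure P] {X : Ω → α} {A A' : Ω → β}
    (hX : Measurable X) (hA : Measurable A) (hA' : Measurable A')
    {κ ν : Kernel α β} [IsSFiniteKernel κ] [IsSFiniteKernel ν]
    (hκ : P.map (fun ω => (X ω, A ω)) = P.map X ⊗ₘ κ)
    (hν : P.map (fun ω => (X ω, A' ω)) = P.map X ⊗ₘ ν)
    {w : α → β → ℝ} (hw : Measurable (Function.uncurry w)) (hwnn : ∀ x a, 0 ≤ w x a)
    (hac : ∀ᵐ x ∂(P.map X), ν x = (κ x).withDensity (fun a => ENNReal.ofReal (w x a)))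
    {g : α → β → ℝ} (hg : Measurable (Function.uncurry g)) :
    ∫ ω, g (X ω) (A' ω) ∂P = ∫ ω, w (X ω) (A ω) * g (X ω) (A ω) ∂P := by
  have hg' : Measurable fun p : α × β => g p.1 p.2 := hg
  have hwg : Measurable fun p : α × β => w p.1 p.2 * g p.1 p.2 := hw.mul hg
  calc ∫ ω, g (X ω) (A' ω) ∂P
      = ∫ p, g p.1 p.2 ∂(P.map X ⊗ₘ ν) := by
        rw [← hν, integral_map (hX.prodMk hA').aemeasurable hg'.aestronglyMeasurable]
    _ = ∫ p, w p.1 p.2 * g p.1 p.2 ∂(P.map X ⊗ₘ κ) :=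
        integral_compProd_eq_integral_mul_of_withDensity hw hwnn hac _
    _ = ∫ ω, w (X ω) (A ω) * g (X ω) (A ω) ∂P := by
        rw [← hκ, integral_map (hX.prodMk hA).aemeasurable hwg.aestronglyMeasurable]

end DensityRatio

section Tower

variable {Ω : Type*} {m m₀ : MeasurableSpace Ω} {P : Measure Ω} [IsFiniteMeasure P]
  {h Y f : Ω → ℝ} {C : ℝ}

lemma integral_mul_eq_integral_mul_condExp (hm : m ≤ m₀) (hh : StronglyMeasurable[m] h)
    (hC : ∀ᵐ ω ∂P, ‖h ω‖ ≤ C) (hY : Integrable Y P) :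
    ∫ ω, h ω * Y ω ∂P = ∫ ω, h ω * P[Y | m] ω ∂P := by
  rw [← integral_condExp hm]
  exact integral_congr_ae (condExp_stronglyMeasurable_mul_of_bound hm hh hY C hC)

lemma integral_mul_sub_eq_of_ae_eq_condExp (hm : m ≤ m₀) (hh : StronglyMeasurable[m] h)
    (hC : ∀ᵐ ω ∂P, ‖h ω‖ ≤ C) (hY : Integrable Y P) (hf : f =ᵐ[P] P[Y | m])
    {Z : Ω → ℝ} (hYZ : Integrable (fun ω => h ω * (Y ω - Z ω)) P) :
    ∫ ω, h ω * (Y ω - Z ω) ∂P = ∫ ω, h ω * (f ω - Z ω) ∂P := by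
  have hhm : AEStronglyMeasurable h P := (hh.mono hm).aestronglyMeasurable
  have hhY : Integrable (fun ω => h ω * Y ω) P := hY.bdd_mul hhm hC
  have hhf : Integrable (fun ω => h ω * f ω) P :=
    (integrable_condExp.congr hf.symm).bdd_mul hhm hC
  have htower : ∫ ω, h ω * Y ω ∂P = ∫ ω, h ω * f ω ∂P := by
    rw [integral_mul_eq_integral_mul_condExp hm hh hC hY]
    exact integral_congr_ae (hf.mono fun ω hω => by simp only [hω])
  have hdecomp : (fun ω => h ω * (f ω - Z ω))
      = fun ω => h ω * (Y ω - Z ω) - h ω * Y ω + h ω * f ω := by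
    ext ω; ring
  rw [hdecomp, integral_add (f := fun ω => h ω * (Y ω - Z ω) - h ω * Y ω) (hYZ.sub hhY) hhf,
    integral_sub hYZ hhY, htower, sub_add_cancel]

end Tower

theorem srf_double_robustness_general
    {Ω : Type*} [MeasurableSpace Ω] (P : Measure Ω) [IsProbabilityMeasure P]
    {d : ℕ} (X : Ω → (Fin d → ℝ)) (A Atil : Ω → ℝ) (Y : Ω → ℝ)
    (hX : Measurable X) (hA : Measurable A) (hAtil : Measurable Atil)
    (hYint : Integrable Y P)
    -- `μ(X, A)` is a version of `E[Y | σ(X, A)]`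
    (μ : (Fin d → ℝ) → ℝ → ℝ) (hμ : Measurable (Function.uncurry μ))
    (hμver : (fun ω => μ (X ω) (A ω)) =ᵐ[P]
      P[Y | MeasurableSpace.comap (fun ω => (X ω, A ω)) inferInstance])
    -- `w(x, ·)` is the density of the conditional law of `Ã` given `X = x` with respect to
    -- the conditional law of `A` given `X = x`
    (κ ν : Kernel (Fin d → ℝ) ℝ) [IsMarkovKernel κ] [IsMarkovKernel ν]
    (hκ : Measure.map (fun ω => (X ω, A ω)) P = (Measure.map X P).compProd κ)
    (hν : Measure.map (fun ω => (X ω, Atil ω)) P = (Measure.map X P).compProd ν)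
    (w : (Fin d → ℝ) → ℝ → ℝ) (hw : Measurable (Function.uncurry w))
    (hwnn : ∀ x a, 0 ≤ w x a)
    (hac : ∀ᵐ x ∂(Measure.map X P),
      ν x = (κ x).withDensity (fun a => ENNReal.ofReal (w x a)))
    -- candidate nuisance estimators
    (what μhat : (Fin d → ℝ) → ℝ → ℝ)
    (hwhat : Measurable (Function.uncurry what))
    (hμhat : Measurable (Function.uncurry μhat))
    -- essential boundedness
    (hwhat_bdd : ∃ C : ℝ, ∀ᵐ ω ∂P, |what (X ω) (A ω)| ≤ C)
    -- all displayed expectations are finite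
    (hμAtil_int : Integrable (fun ω => μ (X ω) (Atil ω)) P)
    (hμhatAtil_int : Integrable (fun ω => μhat (X ω) (Atil ω)) P)
    (hdeb_int : Integrable (fun ω => what (X ω) (A ω) * (Y ω - μhat (X ω) (A ω))) P)
    -- either the outcome model or the density-ratio model is correctly specified
    (hcorrect : ((fun ω => μhat (X ω) (A ω)) =ᵐ[P] (fun ω => μ (X ω) (A ω)))
      ∨ ((fun ω => what (X ω) (A ω)) =ᵐ[P] (fun ω => w (X ω) (A ω)))) :
    ∫ ω, (what (X ω) (A ω) * (Y ω - μhat (X ω) (A ω)) + μhat (X ω) (Atil ω)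
        - ∫ ω', μ (X ω') (Atil ω') ∂P) ∂P = 0 := by
  obtain ⟨C, hC⟩ := hwhat_bdd
  have hXA : Measurable fun ω => (X ω, A ω) := hX.prodMk hA
  have hdebias : ∫ ω, what (X ω) (A ω) * (Y ω - μhat (X ω) (A ω)) ∂P
      = ∫ ω, what (X ω) (A ω) * (μ (X ω) (A ω) - μhat (X ω) (A ω)) ∂P :=
    integral_mul_sub_eq_of_ae_eq_condExp hXA.comap_le
      (hwhat.comp (comap_measurable _)).stronglyMeasurable
      (hC.mono fun _ h => by rwa [Real.norm_eq_abs]) hYint hμver hdeb_int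
  have hcross : ∫ ω, what (X ω) (A ω) * (μ (X ω) (A ω) - μhat (X ω) (A ω)) ∂P
      = ∫ ω, w (X ω) (A ω) * (μ (X ω) (A ω) - μhat (X ω) (A ω)) ∂P := by
    refine integral_congr_ae ?_
    rcases hcorrect with h | h <;> filter_upwards [h] with ω hω <;> simp [hω]
  have htransfer : ∫ ω, (μ (X ω) (Atil ω) - μhat (X ω) (Atil ω)) ∂P
      = ∫ ω, w (X ω) (A ω) * (μ (X ω) (A ω) - μhat (X ω) (A ω)) ∂P :=
    integral_comp_eq_integral_mul_of_withDensity (g := fun x a => μ x a - μhat x a)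
      hX hA hAtil hκ hν hw hwnn hac (hμ.sub hμhat)
  rw [integral_sub (hdeb_int.add hμhatAtil_int : Integrable (fun ω => _ + _) P)
      (integrable_const _), integral_add hdeb_int hμhatAtil_int, hdebias, hcross, ← htransfer,
    integral_sub hμAtil_int hμhatAtil_int, integral_const]
  simp

/-- Double robustness (Proposition 1): the population estimating equation `E[φ] = 0` holds
if either the outcome model or the density-ratio model is correctly specified. -/
theorem srf_double_robustness
    {Ω : Type*} [MeasurableSpace Ω] (P : Measure Ω) [IsProbabilityMeasure P]
    {d : ℕ} (X : Ω → (Fin d → ℝ)) (A Atil : Ω → ℝ) (Y : Ω → ℝ)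
    (hX : Measurable X) (hA : Measurable A) (hAtil : Measurable Atil) (hY : Measurable Y)
    (hYint : Integrable Y P)
    -- `μ(X, A)` is a version of `E[Y | σ(X, A)]`
    (μ : (Fin d → ℝ) → ℝ → ℝ) (hμ : Measurable (Function.uncurry μ))
    (hμver : (fun ω => μ (X ω) (A ω)) =ᵐ[P]
      P[Y | MeasurableSpace.comap (fun ω => (X ω, A ω)) inferInstance])
    -- `w(x, ·)` is the density of the conditional law of `Ã` given `X = x` with respect to
    -- the conditional law of `A` given `X = x`
    (κ ν : Kernel (Fin d → ℝ) ℝ) [IsMarkovKernel κ] [IsMarkovKernel ν]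
    (hκ : Measure.map (fun ω => (X ω, A ω)) P = (Measure.map X P).compProd κ)
    (hν : Measure.map (fun ω => (X ω, Atil ω)) P = (Measure.map X P).compProd ν)
    (w : (Fin d → ℝ) → ℝ → ℝ) (hw : Measurable (Function.uncurry w))
    (hwnn : ∀ x a, 0 ≤ w x a)
    (hac : ∀ᵐ x ∂(Measure.map X P),
      ν x = (κ x).withDensity (fun a => ENNReal.ofReal (w x a)))
    -- candidate nuisance estimators
    (what μhat : (Fin d → ℝ) → ℝ → ℝ)
    (hwhat : Measurable (Function.uncurry what))
    (hμhat : Measurable (Function.uncurry μhat))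
    -- essential boundedness
    (hwhat_bdd : ∃ C : ℝ, ∀ᵐ ω ∂P, |what (X ω) (A ω)| ≤ C)
    (hμhat_bdd : ∃ C : ℝ, ∀ᵐ ω ∂P, |μhat (X ω) (A ω)| ≤ C)
    (hμ_bdd : ∃ C : ℝ, ∀ᵐ ω ∂P, |μ (X ω) (A ω)| ≤ C)
    (hw_bdd : ∃ C : ℝ, ∀ᵐ ω ∂P, |w (X ω) (A ω)| ≤ C)
    -- all displayed expectations are finite
    (hμAtil_int : Integrable (fun ω => μ (X ω) (Atil ω)) P)
    (hμhatAtil_int : Integrable (fun ω => μhat (X ω) (Atil ω)) P)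
    (hdeb_int : Integrable (fun ω => what (X ω) (A ω) * (Y ω - μhat (X ω) (A ω))) P)
    (hprod_int : Integrable (fun ω =>
      (what (X ω) (A ω) - w (X ω) (A ω)) * (μ (X ω) (A ω) - μhat (X ω) (A ω))) P)
    -- either the outcome model or the density-ratio model is correctly specified
    (hcorrect : ((fun ω => μhat (X ω) (A ω)) =ᵐ[P] (fun ω => μ (X ω) (A ω)))
      ∨ ((fun ω => what (X ω) (A ω)) =ᵐ[P] (fun ω => w (X ω) (A ω)))) :
    ∫ ω, (what (X ω) (A ω) * (Y ω - μhat (X ω) (A ω)) + μhat (X ω) (Atil ω)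
        - ∫ ω', μ (X ω') (Atil ω') ∂P) ∂P = 0 :=
  srf_double_robustness_general P X A Atil Y hX hA hAtil hYint μ hμ hμver κ ν hκ hν w hw hwnn hac
    what μhat hwhat hμhat hwhat_bdd hμAtil_int hμhatAtil_int hdeb_int hcorrect
end

section
/- In the setting of the double-robustness identity — a probability space with X: Ω → ℝ^d, A, Ã: Ω → ℝ, Y integrable; μ(X, A) a version of E[Y | σ(X, A)]; w(x,·) the density of the conditional law of Ã given X = x with respect to the conditional law of A given X = x; ŵ, μ̂ measurable with all relevant quantities essentially bounded and integrable; ψ = E[μ(X, Ã)] — suppose |ŵ(X, A) − w(X, A)| ≤ r₂ almost surely and |μ̂(X, A) − μ(X, A)| ≤ r₁ almost surely, for constants r₁, r₂ ≥ 0. Then |E[ŵ(X, A)(Y − μ̂(X, A)) + μ̂(X, Ã) − ψ]| ≤ r₁ · r₂. -/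
/-!
The bias equals `E[(ŵ - w)(X, A) · (μ - μ̂)(X, A)]`, which is at most `r₂ r₁` in absolute value.
Two facts give this identity: the debiasing term `ŵ(X, A)(Y - μ(X, A))` has mean zero, because
`ŵ(X, A)` is `σ(X, A)`-measurable and `μ(X, A) = E[Y | X, A]`; and
`E[f(X, Ã)] = E[w(X, A) f(X, A)]`, because disintegrating over `X` shows that the law of `(X, Ã)`
is the law of `(X, A)` reweighted by `w`.
-/

open MeasureTheory ProbabilityTheory
open scoped ENNReal

section ChangeOfMeasure

variable {α E : Type*} [MeasurableSpace α] [NormedAddCommGroup E] [NormedSpace ℝ E]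
  {μ : Measure α} {w : α → ℝ}

lemma integral_withDensity_ofReal (hw : Measurable w) (hw0 : ∀ x, 0 ≤ w x) (g : α → E) :
    ∫ x, g x ∂μ.withDensity (fun x => ENNReal.ofReal (w x)) = ∫ x, w x • g x ∂μ := by
  rw [show (fun x => ENNReal.ofReal (w x)) = fun x => ((w x).toNNReal : ℝ≥0∞) from rfl,
    integral_withDensity_eq_integral_smul hw.real_toNNReal]
  simp only [NNReal.smul_def, Real.coe_toNNReal _ (hw0 _)]

lemma integrable_withDensity_ofReal_iff (hw : Measurable w) (hw0 : ∀ x, 0 ≤ w x) {g : α → E} :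
    Integrable g (μ.withDensity fun x => ENNReal.ofReal (w x)) ↔
      Integrable (fun x => w x • g x) μ := by
  rw [show (fun x => ENNReal.ofReal (w x)) = fun x => ((w x).toNNReal : ℝ≥0∞) from rfl,
    integrable_withDensity_iff_integrable_smul hw.real_toNNReal]
  simp only [NNReal.smul_def, Real.coe_toNNReal _ (hw0 _)]

end ChangeOfMeasure

lemma MeasureTheory.Measure.compProd_eq_withDensity_of_ae_eq_s6 {α β : Type*} [MeasurableSpace α]
    [MeasurableSpace β] {ρ : Measure α} [SFinite ρ] {κ ν : Kernel α β} [IsSFiniteKernel κ]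
    [IsSFiniteKernel ν] {f : α → β → ℝ≥0∞} (hf : Measurable (Function.uncurry f))
    (hf_ne_top : ∀ a b, f a b ≠ ∞) (h : ∀ᵐ a ∂ρ, ν a = (κ a).withDensity (f a)) :
    ρ ⊗ₘ ν = (ρ ⊗ₘ κ).withDensity fun p => f p.1 p.2 := by
  have := Kernel.IsSFiniteKernel.withDensity κ hf_ne_top
  rw [← Measure.compProd_withDensity hf]
  refine Measure.compProd_congr ?_
  filter_upwards [h] with a ha
  rw [ha, Kernel.withDensity_apply _ hf]

section LawChange

variable {Ω β : Type*} [MeasurableSpace Ω] [MeasurableSpace β] {P : Measure Ω} {Z Z' : Ω → β}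
  {w : β → ℝ}

lemma integral_comp_eq_integral_mul_of_map_eq_withDensity (hZ : Measurable Z)
    (hZ' : Measurable Z') (hw : Measurable w) (hw0 : ∀ b, 0 ≤ w b)
    (hlaw : P.map Z' = (P.map Z).withDensity fun b => ENNReal.ofReal (w b))
    {g : β → ℝ} (hg : Measurable g) :
    ∫ ω, g (Z' ω) ∂P = ∫ ω, w (Z ω) * g (Z ω) ∂P := by
  calc ∫ ω, g (Z' ω) ∂P = ∫ b, g b ∂P.map Z' :=
        (integral_map hZ'.aemeasurable hg.aestronglyMeasurable).symm
    _ = ∫ b, w b * g b ∂P.map Z := by rw [hlaw, integral_withDensity_ofReal hw hw0]; rfl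
    _ = ∫ ω, w (Z ω) * g (Z ω) ∂P := integral_map hZ.aemeasurable (hw.mul hg).aestronglyMeasurable

lemma integrable_comp_iff_of_map_eq_withDensity (hZ : Measurable Z)
    (hZ' : Measurable Z') (hw : Measurable w) (hw0 : ∀ b, 0 ≤ w b)
    (hlaw : P.map Z' = (P.map Z).withDensity fun b => ENNReal.ofReal (w b))
    {g : β → ℝ} (hg : Measurable g) :
    Integrable (fun ω => g (Z' ω)) P ↔ Integrable (fun ω => w (Z ω) * g (Z ω)) P := by
  calc Integrable (fun ω => g (Z' ω)) P ↔ Integrable g (P.map Z') :=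
        (integrable_map_measure hg.aestronglyMeasurable hZ'.aemeasurable).symm
    _ ↔ Integrable (fun b => w b * g b) (P.map Z) := by
        rw [hlaw, integrable_withDensity_ofReal_iff hw hw0]; rfl
    _ ↔ Integrable (fun ω => w (Z ω) * g (Z ω)) P :=
        integrable_map_measure (hw.mul hg).aestronglyMeasurable hZ.aemeasurable

end LawChange

lemma integral_mul_sub_condExp_eq_zero {Ω : Type*} {m m₀ : MeasurableSpace Ω}
    {P : Measure Ω} [IsFiniteMeasure P] (hm : m ≤ m₀) {g Y : Ω → ℝ}
    (hg : StronglyMeasurable[m] g) (hg_bdd : ∃ C, ∀ᵐ ω ∂P, |g ω| ≤ C) (hY : Integrable Y P) :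
    ∫ ω, g ω * (Y ω - P[Y|m] ω) ∂P = 0 := by
  obtain ⟨C, hC⟩ := hg_bdd
  have hgY : Integrable (fun ω => g ω * Y ω) P :=
    hY.bdd_mul (hg.mono hm).aestronglyMeasurable hC
  have hgE : Integrable (fun ω => g ω * P[Y|m] ω) P :=
    integrable_condExp.bdd_mul (hg.mono hm).aestronglyMeasurable hC
  have hpull : ∫ ω, g ω * Y ω ∂P = ∫ ω, g ω * P[Y|m] ω ∂P := by
    rw [← integral_condExp hm]
    exact integral_congr_ae (condExp_mul_of_stronglyMeasurable_left hg hgY hY)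
  simp_rw [mul_sub]
  rw [integral_sub hgY hgE, hpull, sub_self]

lemma abs_integral_mul_le {Ω : Type*} [MeasurableSpace Ω] {P : Measure Ω}
    [IsProbabilityMeasure P] {f g : Ω → ℝ} {a b : ℝ} (hf : ∀ᵐ ω ∂P, |f ω| ≤ a)
    (hg : ∀ᵐ ω ∂P, |g ω| ≤ b) :
    |∫ ω, f ω * g ω ∂P| ≤ a * b := by
  have h := norm_integral_le_of_norm_le_const (μ := P) (f := fun ω => f ω * g ω) (C := a * b)
    (by
      filter_upwards [hf, hg] with ω hfω hgω
      rw [Real.norm_eq_abs, abs_mul]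
      exact mul_le_mul hfω hgω (abs_nonneg _) ((abs_nonneg _).trans hfω))
  simpa using h

lemma integral_debiased_sub_eq_integral_mul_sub {Ω : Type*} [MeasurableSpace Ω]
    {P : Measure Ω} [IsProbabilityMeasure P] {Y W What M Mhat Mtil Mhattil : Ω → ℝ}
    (hdeb : Integrable (fun ω => What ω * (Y ω - Mhat ω)) P) (hMhattil : Integrable Mhattil P)
    (hWM : Integrable (fun ω => W ω * M ω) P) (hWMhat : Integrable (fun ω => W ω * Mhat ω) P)
    (hprod : Integrable (fun ω => (What ω - W ω) * (M ω - Mhat ω)) P)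
    (hMtil_eq : ∫ ω, Mtil ω ∂P = ∫ ω, W ω * M ω ∂P)
    (hMhattil_eq : ∫ ω, Mhattil ω ∂P = ∫ ω, W ω * Mhat ω ∂P)
    (horth : ∫ ω, What ω * (Y ω - M ω) ∂P = 0) :
    ∫ ω, (What ω * (Y ω - Mhat ω) + Mhattil ω - ∫ ω', Mtil ω' ∂P) ∂P =
      ∫ ω, (What ω - W ω) * (M ω - Mhat ω) ∂P := by
  have hres : Integrable (fun ω => What ω * (Y ω - M ω)) P :=
    (((hdeb.add hWMhat).sub hWM).sub hprod).congr (.of_forall fun ω => by dsimp; ring)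
  have hdecomp : ∫ ω, What ω * (Y ω - Mhat ω) ∂P =
      ∫ ω, What ω * (Y ω - M ω) ∂P + ∫ ω, (What ω - W ω) * (M ω - Mhat ω) ∂P
        - ∫ ω, W ω * Mhat ω ∂P + ∫ ω, W ω * M ω ∂P := by
    calc ∫ ω, What ω * (Y ω - Mhat ω) ∂P
        = ∫ ω, (What ω * (Y ω - M ω) + (What ω - W ω) * (M ω - Mhat ω)
            - W ω * Mhat ω + W ω * M ω) ∂P :=
          integral_congr_ae (.of_forall fun ω => by ring)
      _ = _ := by
          rw [integral_add ?_ hWM, integral_sub ?_ hWMhat, integral_add hres hprod]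
          exacts [hres.add hprod, (hres.add hprod).sub hWMhat]
  rw [integral_sub ?_ (integrable_const _), integral_add hdeb hMhattil, integral_const,
    probReal_univ, one_smul, hMtil_eq, hMhattil_eq, hdecomp, horth]
  · ring
  · exact hdeb.add hMhattil

theorem srf_product_bias_bound_general
    {Ω : Type*} [MeasurableSpace Ω] (P : Measure Ω) [IsProbabilityMeasure P]
    {d : ℕ} (X : Ω → (Fin d → ℝ)) (A Atil : Ω → ℝ) (Y : Ω → ℝ)
    (hX : Measurable X) (hA : Measurable A) (hAtil : Measurable Atil)
    (hYint : Integrable Y P)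
    -- `μ(X, A)` is a version of `E[Y | σ(X, A)]`
    (μ : (Fin d → ℝ) → ℝ → ℝ) (hμ : Measurable (Function.uncurry μ))
    (hμver : (fun ω => μ (X ω) (A ω)) =ᵐ[P]
      P[Y | MeasurableSpace.comap (fun ω => (X ω, A ω)) inferInstance])
    -- `w(x, ·)` is the density of the conditional law of `Ã` given `X = x` with respect to
    -- the conditional law of `A` given `X = x`
    (κ ν : Kernel (Fin d → ℝ) ℝ) [IsMarkovKernel κ] [IsMarkovKernel ν]
    (hκ : Measure.map (fun ω => (X ω, A ω)) P = (Measure.map X P).compProd κ)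
    (hν : Measure.map (fun ω => (X ω, Atil ω)) P = (Measure.map X P).compProd ν)
    (w : (Fin d → ℝ) → ℝ → ℝ) (hw : Measurable (Function.uncurry w))
    (hwnn : ∀ x a, 0 ≤ w x a)
    (hac : ∀ᵐ x ∂(Measure.map X P),
      ν x = (κ x).withDensity (fun a => ENNReal.ofReal (w x a)))
    -- candidate nuisance estimators
    (what μhat : (Fin d → ℝ) → ℝ → ℝ)
    (hwhat : Measurable (Function.uncurry what))
    (hμhat : Measurable (Function.uncurry μhat))
    -- essential boundedness
    (hwhat_bdd : ∃ C : ℝ, ∀ᵐ ω ∂P, |what (X ω) (A ω)| ≤ C)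
    -- all displayed expectations are finite
    (hμAtil_int : Integrable (fun ω => μ (X ω) (Atil ω)) P)
    (hμhatAtil_int : Integrable (fun ω => μhat (X ω) (Atil ω)) P)
    (hdeb_int : Integrable (fun ω => what (X ω) (A ω) * (Y ω - μhat (X ω) (A ω))) P)
    (hprod_int : Integrable (fun ω =>
      (what (X ω) (A ω) - w (X ω) (A ω)) * (μ (X ω) (A ω) - μhat (X ω) (A ω))) P)
    -- sup-norm errors of the nuisance estimators
    {r₁ r₂ : ℝ}
    (hr₂ : ∀ᵐ ω ∂P, |what (X ω) (A ω) - w (X ω) (A ω)| ≤ r₂)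
    (hr₁ : ∀ᵐ ω ∂P, |μhat (X ω) (A ω) - μ (X ω) (A ω)| ≤ r₁) :
    |∫ ω, (what (X ω) (A ω) * (Y ω - μhat (X ω) (A ω)) + μhat (X ω) (Atil ω)
        - ∫ ω', μ (X ω') (Atil ω') ∂P) ∂P| ≤ r₁ * r₂ := by
  have hXA : Measurable fun ω => (X ω, A ω) := hX.prodMk hA
  have hXAtil : Measurable fun ω => (X ω, Atil ω) := hX.prodMk hAtil
  have hwnn' : ∀ p, 0 ≤ Function.uncurry w p := fun p => hwnn p.1 p.2
  have hlaw : P.map (fun ω => (X ω, Atil ω)) =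
      (P.map fun ω => (X ω, A ω)).withDensity fun p => ENNReal.ofReal (Function.uncurry w p) := by
    rw [hν, hκ]
    exact Measure.compProd_eq_withDensity_of_ae_eq_s6 (f := fun x a => ENNReal.ofReal (w x a))
      hw.ennreal_ofReal (fun _ _ => ENNReal.ofReal_ne_top) hac
  have hψ : ∫ ω, μ (X ω) (Atil ω) ∂P = ∫ ω, w (X ω) (A ω) * μ (X ω) (A ω) ∂P :=
    integral_comp_eq_integral_mul_of_map_eq_withDensity hXA hXAtil hw hwnn' hlaw hμ
  have hψhat : ∫ ω, μhat (X ω) (Atil ω) ∂P = ∫ ω, w (X ω) (A ω) * μhat (X ω) (A ω) ∂P :=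
    integral_comp_eq_integral_mul_of_map_eq_withDensity hXA hXAtil hw hwnn' hlaw hμhat
  have hwμ_int : Integrable (fun ω => w (X ω) (A ω) * μ (X ω) (A ω)) P :=
    (integrable_comp_iff_of_map_eq_withDensity hXA hXAtil hw hwnn' hlaw hμ).1 hμAtil_int
  have hwμhat_int : Integrable (fun ω => w (X ω) (A ω) * μhat (X ω) (A ω)) P :=
    (integrable_comp_iff_of_map_eq_withDensity hXA hXAtil hw hwnn' hlaw hμhat).1 hμhatAtil_int
  have horth : ∫ ω, what (X ω) (A ω) * (Y ω - μ (X ω) (A ω)) ∂P = 0 := by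
    rw [← integral_mul_sub_condExp_eq_zero hXA.comap_le
      (hwhat.comp (comap_measurable _)).stronglyMeasurable hwhat_bdd hYint]
    refine integral_congr_ae ?_
    filter_upwards [hμver] with ω hω
    rw [hω]
    rfl
  rw [integral_debiased_sub_eq_integral_mul_sub hdeb_int hμhatAtil_int hwμ_int hwμhat_int
    hprod_int hψ hψhat horth]
  exact (abs_integral_mul_le hr₂ (by simpa only [abs_sub_comm] using hr₁)).trans_eq (mul_comm _ _)

/-- Quantitative product-bias bound (Proposition 1): the bias of the population estimating
equation is bounded by the product of the sup-norm errors of the two nuisance estimators. -/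
theorem srf_product_bias_bound
    {Ω : Type*} [MeasurableSpace Ω] (P : Measure Ω) [IsProbabilityMeasure P]
    {d : ℕ} (X : Ω → (Fin d → ℝ)) (A Atil : Ω → ℝ) (Y : Ω → ℝ)
    (hX : Measurable X) (hA : Measurable A) (hAtil : Measurable Atil) (hY : Measurable Y)
    (hYint : Integrable Y P)
    -- `μ(X, A)` is a version of `E[Y | σ(X, A)]`
    (μ : (Fin d → ℝ) → ℝ → ℝ) (hμ : Measurable (Function.uncurry μ))
    (hμver : (fun ω => μ (X ω) (A ω)) =ᵐ[P]
      P[Y | MeasurableSpace.comap (fun ω => (X ω, A ω)) inferInstance])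
    -- `w(x, ·)` is the density of the conditional law of `Ã` given `X = x` with respect to
    -- the conditional law of `A` given `X = x`
    (κ ν : Kernel (Fin d → ℝ) ℝ) [IsMarkovKernel κ] [IsMarkovKernel ν]
    (hκ : Measure.map (fun ω => (X ω, A ω)) P = (Measure.map X P).compProd κ)
    (hν : Measure.map (fun ω => (X ω, Atil ω)) P = (Measure.map X P).compProd ν)
    (w : (Fin d → ℝ) → ℝ → ℝ) (hw : Measurable (Function.uncurry w))
    (hwnn : ∀ x a, 0 ≤ w x a)
    (hac : ∀ᵐ x ∂(Measure.map X P),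
      ν x = (κ x).withDensity (fun a => ENNReal.ofReal (w x a)))
    -- candidate nuisance estimators
    (what μhat : (Fin d → ℝ) → ℝ → ℝ)
    (hwhat : Measurable (Function.uncurry what))
    (hμhat : Measurable (Function.uncurry μhat))
    -- essential boundedness
    (hwhat_bdd : ∃ C : ℝ, ∀ᵐ ω ∂P, |what (X ω) (A ω)| ≤ C)
    (hμhat_bdd : ∃ C : ℝ, ∀ᵐ ω ∂P, |μhat (X ω) (A ω)| ≤ C)
    (hμ_bdd : ∃ C : ℝ, ∀ᵐ ω ∂P, |μ (X ω) (A ω)| ≤ C)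
    (hw_bdd : ∃ C : ℝ, ∀ᵐ ω ∂P, |w (X ω) (A ω)| ≤ C)
    -- all displayed expectations are finite
    (hμAtil_int : Integrable (fun ω => μ (X ω) (Atil ω)) P)
    (hμhatAtil_int : Integrable (fun ω => μhat (X ω) (Atil ω)) P)
    (hdeb_int : Integrable (fun ω => what (X ω) (A ω) * (Y ω - μhat (X ω) (A ω))) P)
    (hprod_int : Integrable (fun ω =>
      (what (X ω) (A ω) - w (X ω) (A ω)) * (μ (X ω) (A ω) - μhat (X ω) (A ω))) P)
    -- sup-norm errors of the nuisance estimators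
    {r₁ r₂ : ℝ} (hr₁0 : 0 ≤ r₁) (hr₂0 : 0 ≤ r₂)
    (hr₂ : ∀ᵐ ω ∂P, |what (X ω) (A ω) - w (X ω) (A ω)| ≤ r₂)
    (hr₁ : ∀ᵐ ω ∂P, |μhat (X ω) (A ω) - μ (X ω) (A ω)| ≤ r₁) :
    |∫ ω, (what (X ω) (A ω) * (Y ω - μhat (X ω) (A ω)) + μhat (X ω) (Atil ω)
        - ∫ ω', μ (X ω') (Atil ω') ∂P) ∂P| ≤ r₁ * r₂ :=
  srf_product_bias_bound_general P X A Atil Y hX hA hAtil hYint μ hμ hμver κ ν hκ hν w hw hwnn hac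
    what μhat hwhat hμhat hwhat_bdd hμAtil_int hμhatAtil_int hdeb_int hprod_int hr₂ hr₁
end

section
/- Let p(y|a,x), p(a|x), p̃(a|x), p(x) be nonnegative measurable functions on the appropriate Euclidean domains satisfying ∫ p(y|a,x) dy = 1 for all (a,x), ∫ p(a|x) da = 1 and ∫ p̃(a|x) da = 1 for all x, and ∫ p(x) dx = 1; write p(o) = p(y|a,x) p(a|x) p(x) and p̃(o) = p(y|a,x) p̃(a|x) p(x) for o = (y, a, x). Assume p(a|x) > 0 whenever p̃(a|x) > 0 and define w(x, a) = p̃(a|x)/p(a|x) (and 0 where p(a|x) = 0), and μ(x, a) = ∫ y p(y|a,x) dy. Let s₁(y,a,x), s₂(a,x), s₃(x) be measurable with ∫ s₁(y,a,x) p(y|a,x) dy = 0 for all (a,x), and assume all integrands below are integrable (so that Fubini's theorem applies). Then ∫ y s₁(y,a,x) p̃(o) do = ∫ w(x,a)(y − μ(x,a)) (s₁(y,a,x) + s₂(a,x) + s₃(x)) p(o) do. -/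
/-!
Integrating out `y` first (Fubini), everything reduces to a fixed `(a, x)`, where `w · p(a|x) = p̃(a|x)`
turns the right-hand side into an integral against the same weight `p(y|a,x) p̃(a|x) p(x)`. For the
inner integral in `y`, `∫ (y - μ) · c · p = c (μ - μ) = 0` because `∫ p = 1`, and
`∫ (y - μ) s₁ p = ∫ y s₁ p` because `∫ s₁ p = 0`.
-/

open MeasureTheory

section ScoreIdentity

variable {ν : Measure ℝ} {p s : ℝ → ℝ} {m : ℝ}

theorem integral_mul_score_eq_integral_centered (c : ℝ) (hp : ∫ y, p y ∂ν = 1)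
    (hs : ∫ y, s y * p y ∂ν = 0) (hm : ∫ y, y * p y ∂ν = m)
    (hA : Integrable (fun y => y * s y * p y) ν)
    (hB : Integrable (fun y => (y - m) * (s y + c) * p y) ν) :
    ∫ y, y * s y * p y ∂ν = ∫ y, (y - m) * (s y + c) * p y ∂ν := by
  symm
  rw [← sub_eq_zero, ← integral_sub hB hA]
  rcases eq_or_ne m 0 with rfl | hm0
  · have hdiff : (fun y => (y - 0) * (s y + c) * p y - y * s y * p y) = fun y => c * (y * p y) := by
      ext y; ring
    rw [hdiff, integral_const_mul, hm, mul_zero]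
  -- A non-integrable function has integral `0`, so the nonzero integrals `1` and `m` force integrability.
  have hp_int : Integrable p ν := .of_integral_ne_zero (by rw [hp]; exact one_ne_zero)
  have hyp_int : Integrable (fun y => y * p y) ν := .of_integral_ne_zero (by rwa [hm])
  have hcp_int : Integrable (fun y => c * (y * p y) - c * m * p y) ν :=
    (hyp_int.const_mul c).sub (hp_int.const_mul (c * m))
  have hsp_int : Integrable (fun y => s y * p y) ν := by
    refine (integrable_const_mul_iff hm0.isUnit _).1 ?_
    refine ((hA.sub hB).add hcp_int).congr (.of_forall fun y => ?_)
    simp only [Pi.add_apply, Pi.sub_apply]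
    ring
  have hdiff : (fun y => (y - m) * (s y + c) * p y - y * s y * p y)
      = fun y => (c * (y * p y) - c * m * p y) - m * (s y * p y) := by
    ext y; ring
  rw [hdiff, integral_sub hcp_int (hsp_int.const_mul m),
    integral_sub (hyp_int.const_mul c) (hp_int.const_mul (c * m)),
    integral_const_mul, integral_const_mul, integral_const_mul, hp, hs, hm]
  ring

theorem integral_mul_score_mul_const_eq_integral_centered (c T : ℝ) (hp : ∫ y, p y ∂ν = 1)
    (hs : ∫ y, s y * p y ∂ν = 0) (hm : ∫ y, y * p y ∂ν = m)
    (hA : Integrable (fun y => y * s y * (p y * T)) ν)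
    (hB : Integrable (fun y => (y - m) * (s y + c) * (p y * T)) ν) :
    ∫ y, y * s y * (p y * T) ∂ν = ∫ y, (y - m) * (s y + c) * (p y * T) ∂ν := by
  simp only [← mul_assoc] at hA hB ⊢
  rw [integral_mul_const, integral_mul_const]
  rcases eq_or_ne T 0 with rfl | hT
  · simp
  rw [integrable_mul_const_iff hT.isUnit] at hA hB
  rw [integral_mul_score_eq_integral_centered c hp hs hm hA hB]

end ScoreIdentity

theorem integral_prod_eq_of_integral_left_eq {α β E : Type*} [MeasurableSpace α]
    [MeasurableSpace β] [NormedAddCommGroup E] [NormedSpace ℝ E] {μ : Measure α} {ν : Measure β}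
    [SFinite μ] [SFinite ν] {f g : α × β → E}
    (hf : Integrable f (μ.prod ν)) (hg : Integrable g (μ.prod ν))
    (h : ∀ b, Integrable (fun a => f (a, b)) μ → Integrable (fun a => g (a, b)) μ →
      ∫ a, f (a, b) ∂μ = ∫ a, g (a, b) ∂μ) :
    ∫ z, f z ∂μ.prod ν = ∫ z, g z ∂μ.prod ν := by
  rw [integral_prod_symm f hf, integral_prod_symm g hg]
  refine integral_congr_ae ?_
  filter_upwards [hf.prod_left_ae, hg.prod_left_ae] with b hfb hgb
  exact h b hfb hgb

/-- First-term computation in the pathwise-differentiability proof of Proposition 1: `∫ y s₁ p̃ = ∫ w (y − μ) (s₁ + s₂ + s₃) p`. -/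
theorem srf_eif_first_term
    {d : ℕ}
    -- the densities p(y|a,x), p(a|x), p̃(a|x), p(x)
    (py : ℝ → ℝ → (Fin d → ℝ) → ℝ) (pa pta : ℝ → (Fin d → ℝ) → ℝ)
    (px : (Fin d → ℝ) → ℝ)
    (hpta_nn : ∀ a x, 0 ≤ pta a x)
    -- normalization
    (hpy_one : ∀ a x, ∫ y : ℝ, py y a x = 1)
    -- positivity: p(a|x) > 0 whenever p̃(a|x) > 0
    (hpos : ∀ a x, 0 < pta a x → 0 < pa a x)
    -- the density ratio w(x, a) = p̃(a|x)/p(a|x) (and 0 where p(a|x) = 0)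
    (w : (Fin d → ℝ) → ℝ → ℝ)
    (hw_def : ∀ x a, w x a = if pa a x = 0 then 0 else pta a x / pa a x)
    -- the outcome regression μ(x, a) = ∫ y p(y|a,x) dy
    (μ : (Fin d → ℝ) → ℝ → ℝ) (hμ_def : ∀ x a, μ x a = ∫ y : ℝ, y * py y a x)
    -- the score components
    (s₁ : ℝ → ℝ → (Fin d → ℝ) → ℝ) (s₂ : ℝ → (Fin d → ℝ) → ℝ)
    (s₃ : (Fin d → ℝ) → ℝ)
    (hs₁_zero : ∀ a x, ∫ y : ℝ, s₁ y a x * py y a x = 0)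
    -- integrability of the displayed integrands
    (_ : Integrable (fun o : ℝ × ℝ × (Fin d → ℝ) =>
      o.1 * s₁ o.1 o.2.1 o.2.2 * (py o.1 o.2.1 o.2.2 * pta o.2.1 o.2.2 * px o.2.2)) (volume : Measure (ℝ × ℝ × (Fin d → ℝ))))
    (_ : Integrable (fun o : ℝ × ℝ × (Fin d → ℝ) =>
      w o.2.2 o.2.1 * (o.1 - μ o.2.2 o.2.1) * (s₁ o.1 o.2.1 o.2.2 + s₂ o.2.1 o.2.2 + s₃ o.2.2) * (py o.1 o.2.1 o.2.2 * pa o.2.1 o.2.2 * px o.2.2)) (volume : Measure (ℝ × ℝ × (Fin d → ℝ))))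
    :
    (∫ o : ℝ × ℝ × (Fin d → ℝ),
        o.1 * s₁ o.1 o.2.1 o.2.2 * (py o.1 o.2.1 o.2.2 * pta o.2.1 o.2.2 * px o.2.2))
      = ∫ o : ℝ × ℝ × (Fin d → ℝ),
        w o.2.2 o.2.1 * (o.1 - μ o.2.2 o.2.1) * (s₁ o.1 o.2.1 o.2.2 + s₂ o.2.1 o.2.2 + s₃ o.2.2) * (py o.1 o.2.1 o.2.2 * pa o.2.1 o.2.2 * px o.2.2) := by
  rename_i hL hR
  have hw_mul : ∀ a x, w x a * pa a x = pta a x := fun a x => by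
    rw [hw_def, ite_eq_right_iff.2 fun h => by rw [h, div_zero]]
    refine div_mul_cancel_of_imp fun h => le_antisymm ?_ (hpta_nn a x)
    exact not_lt.1 fun hlt => (hpos a x hlt).ne' h
  have hL_eq : (fun o : ℝ × ℝ × (Fin d → ℝ) =>
      o.1 * s₁ o.1 o.2.1 o.2.2 * (py o.1 o.2.1 o.2.2 * pta o.2.1 o.2.2 * px o.2.2))
      = fun o => o.1 * s₁ o.1 o.2.1 o.2.2 * (py o.1 o.2.1 o.2.2 * (pta o.2.1 o.2.2 * px o.2.2)) :=
    funext fun o => by ring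
  have hR_eq : (fun o : ℝ × ℝ × (Fin d → ℝ) =>
      w o.2.2 o.2.1 * (o.1 - μ o.2.2 o.2.1) * (s₁ o.1 o.2.1 o.2.2 + s₂ o.2.1 o.2.2 + s₃ o.2.2)
        * (py o.1 o.2.1 o.2.2 * pa o.2.1 o.2.2 * px o.2.2))
      = fun o => (o.1 - μ o.2.2 o.2.1) * (s₁ o.1 o.2.1 o.2.2 + (s₂ o.2.1 o.2.2 + s₃ o.2.2))
        * (py o.1 o.2.1 o.2.2 * (pta o.2.1 o.2.2 * px o.2.2)) :=
    funext fun o => by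
      linear_combination (o.1 - μ o.2.2 o.2.1) * (s₁ o.1 o.2.1 o.2.2 + s₂ o.2.1 o.2.2 + s₃ o.2.2)
        * py o.1 o.2.1 o.2.2 * px o.2.2 * hw_mul o.2.1 o.2.2
  rw [hL_eq] at hL ⊢
  rw [hR_eq] at hR ⊢
  rw [Measure.volume_eq_prod] at hL hR ⊢
  exact integral_prod_eq_of_integral_left_eq hL hR fun q =>
    integral_mul_score_mul_const_eq_integral_centered (s₂ q.1 q.2 + s₃ q.2)
      (pta q.1 q.2 * px q.2) (hpy_one q.1 q.2) (hs₁_zero q.1 q.2)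
      (hμ_def q.2 q.1).symm
end

section
/- Let p(y|a,x), p(a|x), p̃(a|x), p(x) be nonnegative measurable functions on the appropriate Euclidean domains satisfying ∫ p(y|a,x) dy = 1 for all (a,x), ∫ p(a|x) da = 1 and ∫ p̃(a|x) da = 1 for all x, and ∫ p(x) dx = 1; write p̃(o) = p(y|a,x) p̃(a|x) p(x) for o = (y, a, x), and define μ(x, a) = ∫ y p(y|a,x) dy and m(x) = ∫ μ(x,a) p̃(a|x) da. Let s₁(y,a,x), s₂(a,x), s₃(x) be measurable with ∫ s₁(y,a,x) p(y|a,x) dy = 0 for all (a,x) and ∫ s₂(a,x) p̃(a|x) da = 0 for all x, and assume all integrands below are integrable (so that Fubini's theorem applies). Then ∫ y s₂(a,x) p̃(o) do = ∫ (μ(x,a) − m(x)) (s₁(y,a,x) + s₂(a,x) + s₃(x)) p̃(o) do. -/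
/-!
Integrate out `y` first: by the definition of `μ` the left side becomes
`∫ p(x) μ(x,a) s₂(a,x) p̃(a|x)`, and on the right the `s₁`-term drops out because `s₁` is centred
under `p(y|a,x)`. Then integrate out `a` for fixed `x`: in `(μ − m)(s₂ + s₃)` the term `s₃ (μ − m)`
integrates to zero by the definition of `m`, and `m s₂` because `s₂` is centred under `p̃(a|x)`.
Splitting an inner integral needs its pieces to be integrable: this follows from `∫ p = 1 ≠ 0`
and, if `m(x) ≠ 0`, from `∫ μ p̃ = m(x) ≠ 0` (a non-integrable function has integral `0`); if
`m(x) = 0` no split is needed.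
-/

open MeasureTheory

section

variable {α β : Type*} [MeasurableSpace α] [MeasurableSpace β] {ν : Measure α}

theorem integral_mul_add_const_mul_eq_of_centered {s p : α → ℝ} (c T : ℝ)
    (hs : ∫ y, s y * p y ∂ν = 0) (hp : ∫ y, p y ∂ν = 1)
    (h : Integrable (fun y => c * (s y + T) * p y) ν) :
    ∫ y, c * (s y + T) * p y ∂ν = c * T := by
  have hp_int : Integrable p ν := .of_integral_ne_zero (by simp [hp])
  have hs_int : Integrable (fun y => c * (s y * p y)) ν := by
    refine (h.sub (hp_int.const_mul (c * T))).congr (.of_forall fun y => ?_)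
    simp only [Pi.sub_apply]; ring
  calc ∫ y, c * (s y + T) * p y ∂ν = ∫ y, c * (s y * p y) + c * T * p y ∂ν := by
        congr 1 with y; ring
    _ = c * T := by
        rw [integral_add hs_int (hp_int.const_mul _), integral_const_mul, integral_const_mul,
          hs, hp, mul_zero, zero_add, mul_one]

theorem integral_sub_mean_mul_add_const_mul_eq_of_centered {f s p : α → ℝ} {M : ℝ} (S : ℝ)
    (hM : ∫ a, f a * p a ∂ν = M) (hs : ∫ a, s a * p a ∂ν = 0) (hp : ∫ a, p a ∂ν = 1)
    (hL : Integrable (fun a => f a * s a * p a) ν)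
    (hR : Integrable (fun a => (f a - M) * (s a + S) * p a) ν) :
    ∫ a, (f a - M) * (s a + S) * p a ∂ν = ∫ a, f a * s a * p a ∂ν := by
  have hp_int : Integrable p ν := .of_integral_ne_zero (by simp [hp])
  set w := fun a => S * (f a * p a) - M * (s a * p a) - M * S * p a
  have hw_int : Integrable w ν := by
    refine (hR.sub hL).congr (.of_forall fun a => ?_)
    simp only [Pi.sub_apply, w]; ring
  suffices ∫ a, w a ∂ν = 0 by
    calc ∫ a, (f a - M) * (s a + S) * p a ∂ν = ∫ a, f a * s a * p a + w a ∂ν := by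
          congr 1 with a; simp only [w]; ring
      _ = ∫ a, f a * s a * p a ∂ν := by rw [integral_add hL hw_int, this, add_zero]
  by_cases hM0 : M = 0
  · simp only [w, hM0, zero_mul, sub_zero]
    rw [integral_const_mul, hM, hM0, mul_zero]
  have hfp_int : Integrable (fun a => S * (f a * p a)) ν :=
    (Integrable.of_integral_ne_zero (hM ▸ hM0)).const_mul S
  have hsp_int : Integrable (fun a => M * (s a * p a)) ν := by
    refine (hfp_int.sub ((hp_int.const_mul (M * S)).add hw_int)).congr (.of_forall fun a => ?_)
    simp only [Pi.sub_apply, Pi.add_apply, w]; ring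
  have hdiff_int : Integrable (fun a => S * (f a * p a) - M * (s a * p a)) ν :=
    hfp_int.sub hsp_int
  simp only [w]
  rw [integral_sub hdiff_int (hp_int.const_mul _), integral_sub hfp_int hsp_int,
    integral_const_mul, integral_const_mul, integral_const_mul, hM, hs, hp]
  ring

theorem integral_const_mul_sub_mean_mul_add_const_mul_eq_of_centered {f s p : α → ℝ} {M : ℝ}
    (k S : ℝ) (hM : ∫ a, f a * p a ∂ν = M) (hs : ∫ a, s a * p a ∂ν = 0) (hp : ∫ a, p a ∂ν = 1)
    (hL : Integrable (fun a => k * (f a * s a * p a)) ν)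
    (hR : Integrable (fun a => k * ((f a - M) * (s a + S) * p a)) ν) :
    ∫ a, k * ((f a - M) * (s a + S) * p a) ∂ν = ∫ a, k * (f a * s a * p a) ∂ν := by
  rcases eq_or_ne k 0 with rfl | hk
  · simp
  rw [integrable_const_mul_iff hk.isUnit] at hL hR
  rw [integral_const_mul, integral_const_mul,
    integral_sub_mean_mul_add_const_mul_eq_of_centered S hM hs hp hL hR]

theorem integral_prod_eq_integral_of_ae_fiber [SFinite ν] {μ : Measure β} [SFinite μ]
    {F : α × β → ℝ} {g : β → ℝ} (hF : Integrable F (ν.prod μ))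
    (hg : ∀ᵐ b ∂μ, ∫ a, F (a, b) ∂ν = g b) :
    ∫ z, F z ∂ν.prod μ = ∫ b, g b ∂μ :=
  (integral_prod_symm F hF).trans (integral_congr_ae hg)

end

/-- Second-term computation in the pathwise-differentiability proof of Proposition 1: `∫ y s₂ p̃ = ∫ (μ − m) (s₁ + s₂ + s₃) p̃`. -/
theorem srf_eif_second_term
    {d : ℕ}
    -- the densities p(y|a,x), p(a|x), p̃(a|x), p(x)
    (py : ℝ → ℝ → (Fin d → ℝ) → ℝ) (pta : ℝ → (Fin d → ℝ) → ℝ)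
    (px : (Fin d → ℝ) → ℝ)
    -- normalization
    (hpy_one : ∀ a x, ∫ y : ℝ, py y a x = 1)
    (hpta_one : ∀ x, ∫ a : ℝ, pta a x = 1)
    -- the outcome regression μ(x, a) = ∫ y p(y|a,x) dy
    (μ : (Fin d → ℝ) → ℝ → ℝ) (hμ_def : ∀ x a, μ x a = ∫ y : ℝ, y * py y a x)
    -- m(x) = ∫ μ(x,a) p̃(a|x) da
    (m : (Fin d → ℝ) → ℝ) (hm_def : ∀ x, m x = ∫ a : ℝ, μ x a * pta a x)
    -- the score components
    (s₁ : ℝ → ℝ → (Fin d → ℝ) → ℝ) (s₂ : ℝ → (Fin d → ℝ) → ℝ)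
    (s₃ : (Fin d → ℝ) → ℝ)
    (hs₁_zero : ∀ a x, ∫ y : ℝ, s₁ y a x * py y a x = 0)
    (hs₂_zero : ∀ x, ∫ a : ℝ, s₂ a x * pta a x = 0)
    -- integrability of the displayed integrands
    (_ : Integrable (fun o : ℝ × ℝ × (Fin d → ℝ) =>
      o.1 * s₂ o.2.1 o.2.2 * (py o.1 o.2.1 o.2.2 * pta o.2.1 o.2.2 * px o.2.2)) (volume : Measure (ℝ × ℝ × (Fin d → ℝ))))
    (_ : Integrable (fun o : ℝ × ℝ × (Fin d → ℝ) =>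
      (μ o.2.2 o.2.1 - m o.2.2) * (s₁ o.1 o.2.1 o.2.2 + s₂ o.2.1 o.2.2 + s₃ o.2.2) * (py o.1 o.2.1 o.2.2 * pta o.2.1 o.2.2 * px o.2.2)) (volume : Measure (ℝ × ℝ × (Fin d → ℝ))))
    :
    (∫ o : ℝ × ℝ × (Fin d → ℝ),
        o.1 * s₂ o.2.1 o.2.2 * (py o.1 o.2.1 o.2.2 * pta o.2.1 o.2.2 * px o.2.2))
      = ∫ o : ℝ × ℝ × (Fin d → ℝ),
        (μ o.2.2 o.2.1 - m o.2.2) * (s₁ o.1 o.2.1 o.2.2 + s₂ o.2.1 o.2.2 + s₃ o.2.2) * (py o.1 o.2.1 o.2.2 * pta o.2.1 o.2.2 * px o.2.2) := by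
  rename_i hL_int hR_int
  set gL : ℝ × (Fin d → ℝ) → ℝ := fun q => px q.2 * (μ q.2 q.1 * s₂ q.1 q.2 * pta q.1 q.2)
  set gR : ℝ × (Fin d → ℝ) → ℝ :=
    fun q => px q.2 * ((μ q.2 q.1 - m q.2) * (s₂ q.1 q.2 + s₃ q.2) * pta q.1 q.2)
  rw [Measure.volume_eq_prod] at hL_int hR_int ⊢
  have hL_fiber : ∀ q, ∫ y, y * s₂ q.1 q.2 * (py y q.1 q.2 * pta q.1 q.2 * px q.2) = gL q := by
    rintro ⟨a, x⟩
    rw [show gL (a, x) = px x * s₂ a x * pta a x * μ x a by dsimp only [gL]; ring, hμ_def,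
      ← integral_const_mul]
    congr 1 with y; ring
  have hR_fiber : ∀ᵐ q, ∫ y, (μ q.2 q.1 - m q.2) * (s₁ y q.1 q.2 + s₂ q.1 q.2 + s₃ q.2)
      * (py y q.1 q.2 * pta q.1 q.2 * px q.2) = gR q := by
    filter_upwards [hR_int.prod_left_ae] with ⟨a, x⟩ hq
    have hshape : ∀ y, (μ x a - m x) * (s₁ y a x + s₂ a x + s₃ x) * (py y a x * pta a x * px x)
        = (px x * (μ x a - m x) * pta a x) * (s₁ y a x + (s₂ a x + s₃ x)) * py y a x := by
      intro y; ring
    simp_rw [hshape] at hq ⊢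
    rw [integral_mul_add_const_mul_eq_of_centered _ _ (hs₁_zero a x) (hpy_one a x) hq]
    ring
  have hgL_int : Integrable gL (volume.prod volume) :=
    hL_int.integral_prod_right.congr (.of_forall hL_fiber)
  have hgR_int : Integrable gR (volume.prod volume) :=
    hR_int.integral_prod_right.congr hR_fiber
  have ha_fiber : ∀ᵐ x, ∫ a, gR (a, x) = ∫ a, gL (a, x) := by
    filter_upwards [hgL_int.prod_left_ae, hgR_int.prod_left_ae] with x hLx hRx
    exact integral_const_mul_sub_mean_mul_add_const_mul_eq_of_centered (px x) (s₃ x) (hm_def x).symm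
      (hs₂_zero x) (hpta_one x) hLx hRx
  rw [integral_prod_eq_integral_of_ae_fiber hL_int (.of_forall hL_fiber),
    integral_prod_eq_integral_of_ae_fiber hR_int hR_fiber, Measure.volume_eq_prod,
    integral_prod_eq_integral_of_ae_fiber hgR_int ha_fiber, integral_prod_symm _ hgL_int]
end

section
/- Let p(y|a,x), p(a|x), p̃(a|x), p(x) be nonnegative measurable functions on the appropriate Euclidean domains satisfying ∫ p(y|a,x) dy = 1 for all (a,x), ∫ p(a|x) da = 1 and ∫ p̃(a|x) da = 1 for all x, and ∫ p(x) dx = 1; write p̃(o) = p(y|a,x) p̃(a|x) p(x) for o = (y, a, x), and define μ(x, a) = ∫ y p(y|a,x) dy, m(x) = ∫ μ(x,a) p̃(a|x) da, and ψ = ∫ y p̃(o) do. Let s₁(y,a,x), s₂(a,x), s₃(x) be measurable with ∫ s₁(y,a,x) p(y|a,x) dy = 0 for all (a,x), ∫ s₂(a,x) p̃(a|x) da = 0 for all x, and ∫ s₃(x) p(x) dx = 0, and assume all integrands below are integrable (so that Fubini's theorem applies). Then ∫ y s₃(x) p̃(o) do = ∫ (m(x) − ψ) (s₁(y,a,x)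 + s₂(a,x) + s₃(x)) p̃(o) do. -/
/-!
Both sides are computed by Fubini, integrating out `y`, then `a`, then `x`. On the left,
integrating `y` against `p(y|a,x)` produces `μ(x,a)` and integrating `a` against `p̃(a|x)` produces
`m(x)`, leaving `∫ m s₃ p`. On the right, the scores `s₁` and `s₂` have conditional mean zero,
so only `∫ (m - ψ) s₃ p` survives, and this differs from the left side by `ψ ∫ s₃ p = 0`.
-/

open MeasureTheory

section

variable {α β : Type*} [MeasurableSpace α] [MeasurableSpace β] {μ : Measure α} {ν : Measure β}

theorem integral_prod_eq_integral_of_ae_integral_eq {E : Type*} [NormedAddCommGroup E]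
    [NormedSpace ℝ E] [CompleteSpace E] [SFinite μ] [SFinite ν] {F : α × β → E} {G : β → E}
    (hF : Integrable F (μ.prod ν))
    (hG : ∀ᵐ b ∂ν, Integrable (fun a => F (a, b)) μ → ∫ a, F (a, b) ∂μ = G b) :
    Integrable G ν ∧ ∫ z, F z ∂μ.prod ν = ∫ b, G b ∂ν := by
  have hae : (fun b => ∫ a, F (a, b) ∂μ) =ᵐ[ν] G := by
    filter_upwards [hF.prod_left_ae, hG] with b hb hb_eq
    exact hb_eq hb
  exact ⟨hF.integral_prod_right.congr hae, (integral_prod_symm F hF).trans (integral_congr_ae hae)⟩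

/-- The factor `C` is kept under the integral because, when `C = 0`, integrability of the
integrand says nothing about `(f + c) * g`. -/
theorem integral_const_mul_add_mul_eq_of_integral_mul_eq_zero {f g : α → ℝ}
    (hg : ∫ a, g a ∂μ = 1) (hfg : ∫ a, f a * g a ∂μ = 0) {C c : ℝ}
    (h : Integrable (fun a => C * ((f a + c) * g a)) μ) :
    ∫ a, C * ((f a + c) * g a) ∂μ = C * c := by
  rw [integral_const_mul]
  rcases eq_or_ne C 0 with rfl | hC
  · simp
  have hfcg := (integrable_const_mul_iff (isUnit_iff_ne_zero.mpr hC) _).mp h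
  have hg_int : Integrable g μ := Integrable.of_integral_ne_zero (by simp [hg])
  have hfg_int : Integrable (fun a => f a * g a) μ :=
    (hfcg.sub (hg_int.const_mul c)).congr (ae_of_all _ fun a => by simp only [Pi.sub_apply]; ring)
  simp_rw [add_mul]
  rw [integral_add hfg_int (hg_int.const_mul c), integral_const_mul, hfg, hg]
  ring

theorem integral_sub_const_mul_eq_of_integral_eq_zero {f h : α → ℝ} {c : ℝ}
    (hfh : Integrable (fun a => f a * h a) μ) (hfch : Integrable (fun a => (f a - c) * h a) μ)
    (h0 : ∫ a, h a ∂μ = 0) :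
    ∫ a, (f a - c) * h a ∂μ = ∫ a, f a * h a ∂μ := by
  rw [← sub_eq_zero, ← integral_sub hfch hfh]
  simp_rw [sub_mul, sub_sub_cancel_left]
  rw [integral_neg, integral_const_mul, h0, mul_zero, neg_zero]

end

/-- Third-term computation in the pathwise-differentiability proof of Proposition 1: `∫ y s₃ p̃ = ∫ (m − ψ) (s₁ + s₂ + s₃) p̃`. -/
theorem srf_eif_third_term
    {d : ℕ}
    -- the densities p(y|a,x), p(a|x), p̃(a|x), p(x)
    (py : ℝ → ℝ → (Fin d → ℝ) → ℝ) (pta : ℝ → (Fin d → ℝ) → ℝ)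
    (px : (Fin d → ℝ) → ℝ)
    -- normalization
    (hpy_one : ∀ a x, ∫ y : ℝ, py y a x = 1)
    (hpta_one : ∀ x, ∫ a : ℝ, pta a x = 1)
    -- the outcome regression μ(x, a) = ∫ y p(y|a,x) dy
    (μ : (Fin d → ℝ) → ℝ → ℝ) (hμ_def : ∀ x a, μ x a = ∫ y : ℝ, y * py y a x)
    -- m(x) = ∫ μ(x,a) p̃(a|x) da
    (m : (Fin d → ℝ) → ℝ) (hm_def : ∀ x, m x = ∫ a : ℝ, μ x a * pta a x)
    -- ψ = ∫ y p̃(o) do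
    (ψ : ℝ)
    -- the score components
    (s₁ : ℝ → ℝ → (Fin d → ℝ) → ℝ) (s₂ : ℝ → (Fin d → ℝ) → ℝ)
    (s₃ : (Fin d → ℝ) → ℝ)
    (hs₁_zero : ∀ a x, ∫ y : ℝ, s₁ y a x * py y a x = 0)
    (hs₂_zero : ∀ x, ∫ a : ℝ, s₂ a x * pta a x = 0)
    (hs₃_zero : ∫ x : Fin d → ℝ, s₃ x * px x = 0)
    -- integrability of the displayed integrands
    (_ : Integrable (fun o : ℝ × ℝ × (Fin d → ℝ) =>
      o.1 * s₃ o.2.2 * (py o.1 o.2.1 o.2.2 * pta o.2.1 o.2.2 * px o.2.2)) (volume : Measure (ℝ × ℝ × (Fin d → ℝ))))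
    (_ : Integrable (fun o : ℝ × ℝ × (Fin d → ℝ) =>
      (m o.2.2 - ψ) * (s₁ o.1 o.2.1 o.2.2 + s₂ o.2.1 o.2.2 + s₃ o.2.2) * (py o.1 o.2.1 o.2.2 * pta o.2.1 o.2.2 * px o.2.2)) (volume : Measure (ℝ × ℝ × (Fin d → ℝ))))
    :
    (∫ o : ℝ × ℝ × (Fin d → ℝ),
        o.1 * s₃ o.2.2 * (py o.1 o.2.1 o.2.2 * pta o.2.1 o.2.2 * px o.2.2))
      = ∫ o : ℝ × ℝ × (Fin d → ℝ),
        (m o.2.2 - ψ) * (s₁ o.1 o.2.1 o.2.2 + s₂ o.2.1 o.2.2 + s₃ o.2.2) * (py o.1 o.2.1 o.2.2 * pta o.2.1 o.2.2 * px o.2.2) := by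
  rename_i hint_lhs hint_rhs
  obtain ⟨hint_lhs_ax, hlhs_y⟩ := integral_prod_eq_integral_of_ae_integral_eq
    (G := fun q => s₃ q.2 * px q.2 * (μ q.2 q.1 * pta q.1 q.2)) hint_lhs <|
    ae_of_all _ fun q _ => by
      dsimp only
      rw [hμ_def, ← integral_mul_const, ← integral_const_mul]
      exact integral_congr_ae (ae_of_all _ fun y => by ring)
  obtain ⟨hint_lhs_x, hlhs_a⟩ := integral_prod_eq_integral_of_ae_integral_eq
    (G := fun x => m x * (s₃ x * px x)) hint_lhs_ax <|
    ae_of_all _ fun x _ => by dsimp only; rw [integral_const_mul, ← hm_def, mul_comm]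
  obtain ⟨hint_rhs_ax, hrhs_y⟩ := integral_prod_eq_integral_of_ae_integral_eq
    (G := fun q => (m q.2 - ψ) * px q.2 * ((s₂ q.1 q.2 + s₃ q.2) * pta q.1 q.2)) hint_rhs <|
    ae_of_all _ fun q hq => by
      have hform : ∀ y, (m q.2 - ψ) * (s₁ y q.1 q.2 + s₂ q.1 q.2 + s₃ q.2)
          * (py y q.1 q.2 * pta q.1 q.2 * px q.2) = (m q.2 - ψ) * pta q.1 q.2 * px q.2
          * ((s₁ y q.1 q.2 + (s₂ q.1 q.2 + s₃ q.2)) * py y q.1 q.2) := fun y => by ring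
      simp only [hform] at hq ⊢
      rw [integral_const_mul_add_mul_eq_of_integral_mul_eq_zero (hpy_one _ _) (hs₁_zero _ _) hq]
      ring
  obtain ⟨hint_rhs_x, hrhs_a⟩ := integral_prod_eq_integral_of_ae_integral_eq
    (G := fun x => (m x - ψ) * px x * s₃ x) hint_rhs_ax <|
    ae_of_all _ fun x hx => by
      dsimp only at hx ⊢
      exact integral_const_mul_add_mul_eq_of_integral_mul_eq_zero (hpta_one x) (hs₂_zero x) hx
  calc _ = ∫ x, m x * (s₃ x * px x) := hlhs_y.trans hlhs_a
    _ = ∫ x, (m x - ψ) * (s₃ x * px x) :=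
      (integral_sub_const_mul_eq_of_integral_eq_zero hint_lhs_x
        (hint_rhs_x.congr (ae_of_all _ fun x => by ring)) hs₃_zero).symm
    _ = ∫ x, (m x - ψ) * px x * s₃ x := integral_congr_ae (ae_of_all _ fun x => by ring)
    _ = _ := (hrhs_y.trans hrhs_a).symm
end

section
/- Let p(y|a,x), p(a|x), p̃(a|x), p(x) be nonnegative measurable functions with ∫ p(y|a,x) dy = 1 for all (a,x), ∫ p(a|x) da = 1 and ∫ p̃(a|x) da = 1 for all x, and ∫ p(x) dx = 1; write p(o) = p(y|a,x) p(a|x) p(x) and p̃(o) = p(y|a,x) p̃(a|x) p(x) for o = (y, a, x). Assume p(a|x) > 0 whenever p̃(a|x) > 0 and set w(x,a) = p̃(a|x)/p(a|x) (and 0 where p(a|x) = 0), μ(x,a) = ∫ y p(y|a,x) dy, and ψ = ∫ y p̃(o) do. Let s₁(y,a,x), s₂(a,x), s₃(x) be measurable with ∫ s₁(y,a,x) p(y|a,x) dy = 0 for all (a,x), ∫ s₂(a,x) p̃(a|x) da = 0 for all x, and ∫ s₃(x) p(x) dx = 0; set s(o) = s₁(y,a,x) + s₂(a,x) + s₃(x),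 and assume all integrands below are integrable. Then ∫ y s(o) p̃(o) do = ∫ w(x,a)(y − μ(x,a)) s(o) p(o) do + ∫ (μ(x,a) − ψ) s(o) p̃(o) do. -/
open MeasureTheory

/-!
Wherever `p̃(a|x) > 0` also `p(a|x) > 0`, so `w p = p̃` pointwise and the first integral on the
right is `∫ (y - μ) s p̃`. The two sides therefore differ by `ψ ∫ s p̃`, which vanishes because
the score has mean zero under `p̃`: integrating out `y` removes `s₁` and the factor `p(y|a,x)`,
integrating out `a` then removes `s₂` and `p̃(a|x)`, and `∫ s₃ p = 0`.
-/

lemma ite_div_mul_cancel_of_pos_imp {p q : ℝ} (hq : 0 ≤ q) (hpq : 0 < q → 0 < p) :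
    (if p = 0 then 0 else q / p) * p = q := by
  split_ifs with hp
  · rcases hq.lt_or_eq with hq | rfl
    · exact absurd hp (hpq hq).ne'
    · exact zero_mul p
  · exact div_mul_cancel₀ q hp

section

variable {α β : Type*} [MeasurableSpace α] [MeasurableSpace β]

lemma integral_add_const_mul_density_mul {ν : Measure α} {f g : α → ℝ} {k c : ℝ}
    (hf : ∫ a, f a * g a ∂ν = 0) (hg : ∫ a, g a ∂ν = 1)
    (hint : Integrable (fun a => (f a + k) * (g a * c)) ν) :
    ∫ a, (f a + k) * (g a * c) ∂ν = k * c := by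
  rcases eq_or_ne c 0 with rfl | hc
  · simp
  have hg_int : Integrable g ν := Integrable.of_integral_ne_zero (by rw [hg]; exact one_ne_zero)
  have hfkg : Integrable (fun a => (f a + k) * g a) ν := by
    refine (integrable_mul_const_iff (IsUnit.mk0 c hc) _).1 ?_
    simpa only [mul_assoc] using hint
  have hfg : Integrable (fun a => f a * g a) ν :=
    (hfkg.sub (hg_int.const_mul k)).congr (.of_forall fun a => by simp only [Pi.sub_apply]; ring)
  calc ∫ a, (f a + k) * (g a * c) ∂ν
      = (∫ a, f a * g a ∂ν + k * ∫ a, g a ∂ν) * c := by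
        simp_rw [← mul_assoc, integral_mul_const, add_mul, integral_add hfg (hg_int.const_mul k),
          integral_const_mul]
        ring
    _ = k * c := by rw [hf, hg]; ring

variable {ν : Measure α} {ρ : Measure β} [SFinite ν] [SFinite ρ]

lemma integral_prod_add_mul_density_mul {s p : α → β → ℝ} {t q : β → ℝ}
    (hs : ∀ b, ∫ a, s a b * p a b ∂ν = 0) (hp : ∀ b, ∫ a, p a b ∂ν = 1)
    (hint : Integrable (fun z : α × β => (s z.1 z.2 + t z.2) * (p z.1 z.2 * q z.2)) (ν.prod ρ)) :
    Integrable (fun b => t b * q b) ρ ∧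
      ∫ z, (s z.1 z.2 + t z.2) * (p z.1 z.2 * q z.2) ∂ν.prod ρ = ∫ b, t b * q b ∂ρ := by
  have hfiber : ∀ᵐ b ∂ρ, ∫ a, (s a b + t b) * (p a b * q b) ∂ν = t b * q b := by
    filter_upwards [hint.prod_left_ae] with b hb
    exact integral_add_const_mul_density_mul (hs b) (hp b) hb
  exact ⟨hint.integral_prod_right.congr hfiber,
    (integral_prod_symm _ hint).trans (integral_congr_ae hfiber)⟩

lemma integral_score_mul_density_eq_zero {Y A X : Type*} [MeasurableSpace Y] [MeasurableSpace A]
    [MeasurableSpace X] {νY : Measure Y} {νA : Measure A} {νX : Measure X}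
    [SFinite νY] [SFinite νA] [SFinite νX]
    {py : Y → A → X → ℝ} {pa : A → X → ℝ} {px : X → ℝ}
    {s₁ : Y → A → X → ℝ} {s₂ : A → X → ℝ} {s₃ : X → ℝ}
    (hpy_one : ∀ a x, ∫ y, py y a x ∂νY = 1) (hpa_one : ∀ x, ∫ a, pa a x ∂νA = 1)
    (hs₁ : ∀ a x, ∫ y, s₁ y a x * py y a x ∂νY = 0) (hs₂ : ∀ x, ∫ a, s₂ a x * pa a x ∂νA = 0)
    (hs₃ : ∫ x, s₃ x * px x ∂νX = 0) :
    ∫ o, (s₁ o.1 o.2.1 o.2.2 + s₂ o.2.1 o.2.2 + s₃ o.2.2) *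
      (py o.1 o.2.1 o.2.2 * pa o.2.1 o.2.2 * px o.2.2) ∂νY.prod (νA.prod νX) = 0 := by
  have hassoc : (fun o : Y × A × X => (s₁ o.1 o.2.1 o.2.2 + s₂ o.2.1 o.2.2 + s₃ o.2.2) *
      (py o.1 o.2.1 o.2.2 * pa o.2.1 o.2.2 * px o.2.2)) = fun o =>
      (s₁ o.1 o.2.1 o.2.2 + (s₂ o.2.1 o.2.2 + s₃ o.2.2)) *
      (py o.1 o.2.1 o.2.2 * (pa o.2.1 o.2.2 * px o.2.2)) := funext fun _ => by ring
  rw [hassoc]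
  by_cases hint : Integrable (fun o : Y × A × X => (s₁ o.1 o.2.1 o.2.2 + (s₂ o.2.1 o.2.2 +
      s₃ o.2.2)) * (py o.1 o.2.1 o.2.2 * (pa o.2.1 o.2.2 * px o.2.2))) (νY.prod (νA.prod νX))
  · obtain ⟨hint_AX, hY⟩ := integral_prod_add_mul_density_mul
      (s := fun y (q : A × X) => s₁ y q.1 q.2) (p := fun y (q : A × X) => py y q.1 q.2)
      (t := fun q => s₂ q.1 q.2 + s₃ q.2) (q := fun q => pa q.1 q.2 * px q.2)
      (fun q => hs₁ q.1 q.2) (fun q => hpy_one q.1 q.2) hint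
    obtain ⟨-, hA⟩ := integral_prod_add_mul_density_mul (ρ := νX) hs₂ hpa_one hint_AX
    exact hY.trans (hA.trans hs₃)
  · exact integral_undef hint

lemma integral_mul_score_eq_weighted_residual_add_centered {Ω : Type*} [MeasurableSpace Ω]
    {m : Measure Ω} {Y M S P Q W : Ω → ℝ} {ψ : ℝ} (hWQ : ∀ o, W o * Q o = P o)
    (hS : ∫ o, S o * P o ∂m = 0) (hY : Integrable (fun o => Y o * S o * P o) m)
    (hres : Integrable (fun o => W o * (Y o - M o) * S o * Q o) m)
    (hcen : Integrable (fun o => (M o - ψ) * S o * P o) m) :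
    ∫ o, Y o * S o * P o ∂m =
      ∫ o, W o * (Y o - M o) * S o * Q o ∂m + ∫ o, (M o - ψ) * S o * P o ∂m := by
  have hres_P : (fun o => W o * (Y o - M o) * S o * Q o) = fun o => (Y o - M o) * S o * P o :=
    funext fun o => by rw [← hWQ]; ring
  rw [hres_P] at hres ⊢
  have hψ : ∫ o, Y o * S o * P o ∂m - ∫ o, (Y o - M o) * S o * P o ∂m -
      ∫ o, (M o - ψ) * S o * P o ∂m = ψ * ∫ o, S o * P o ∂m := by
    rw [← integral_sub hY hres, ← integral_const_mul,
      ← integral_sub (f := fun o => Y o * S o * P o - (Y o - M o) * S o * P o) (hY.sub hres) hcen]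
    exact integral_congr_ae (.of_forall fun o => by ring)
  rw [hS, mul_zero] at hψ
  linarith

end

/-- Combined pathwise-differentiability identity underlying Proposition 1: `∫ y s p̃ = ∫ w (y − μ) s p + ∫ (μ − ψ) s p̃` with score `s = s₁ + s₂ + s₃`, i.e. the derivative of the shift-response estimand along the submodel equals the inner product of the score with the efficient influence function. -/
theorem srf_eif_pathwise_derivative
    {d : ℕ}
    -- the densities p(y|a,x), p(a|x), p̃(a|x), p(x)
    (py : ℝ → ℝ → (Fin d → ℝ) → ℝ) (pa pta : ℝ → (Fin d → ℝ) → ℝ)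
    (px : (Fin d → ℝ) → ℝ)
    (hpta_nn : ∀ a x, 0 ≤ pta a x)
    -- normalization
    (hpy_one : ∀ a x, ∫ y : ℝ, py y a x = 1)
    (hpta_one : ∀ x, ∫ a : ℝ, pta a x = 1)
    -- positivity: p(a|x) > 0 whenever p̃(a|x) > 0
    (hpos : ∀ a x, 0 < pta a x → 0 < pa a x)
    -- the density ratio w(x, a) = p̃(a|x)/p(a|x) (and 0 where p(a|x) = 0)
    (w : (Fin d → ℝ) → ℝ → ℝ)
    (hw_def : ∀ x a, w x a = if pa a x = 0 then 0 else pta a x / pa a x)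
    (μ : (Fin d → ℝ) → ℝ → ℝ)
    (ψ : ℝ)
    -- the score components
    (s₁ : ℝ → ℝ → (Fin d → ℝ) → ℝ) (s₂ : ℝ → (Fin d → ℝ) → ℝ)
    (s₃ : (Fin d → ℝ) → ℝ)
    (hs₁_zero : ∀ a x, ∫ y : ℝ, s₁ y a x * py y a x = 0)
    (hs₂_zero : ∀ x, ∫ a : ℝ, s₂ a x * pta a x = 0)
    (hs₃_zero : ∫ x : Fin d → ℝ, s₃ x * px x = 0)
    -- integrability of the displayed integrands
    (_ : Integrable (fun o : ℝ × ℝ × (Fin d → ℝ) =>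
      o.1 * (s₁ o.1 o.2.1 o.2.2 + s₂ o.2.1 o.2.2 + s₃ o.2.2) * (py o.1 o.2.1 o.2.2 * pta o.2.1 o.2.2 * px o.2.2)) (volume : Measure (ℝ × ℝ × (Fin d → ℝ))))
    (_ : Integrable (fun o : ℝ × ℝ × (Fin d → ℝ) =>
      w o.2.2 o.2.1 * (o.1 - μ o.2.2 o.2.1) * (s₁ o.1 o.2.1 o.2.2 + s₂ o.2.1 o.2.2 + s₃ o.2.2) * (py o.1 o.2.1 o.2.2 * pa o.2.1 o.2.2 * px o.2.2)) (volume : Measure (ℝ × ℝ × (Fin d → ℝ))))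
    (_ : Integrable (fun o : ℝ × ℝ × (Fin d → ℝ) =>
      (μ o.2.2 o.2.1 - ψ) * (s₁ o.1 o.2.1 o.2.2 + s₂ o.2.1 o.2.2 + s₃ o.2.2) * (py o.1 o.2.1 o.2.2 * pta o.2.1 o.2.2 * px o.2.2)) (volume : Measure (ℝ × ℝ × (Fin d → ℝ))))
    :
    (∫ o : ℝ × ℝ × (Fin d → ℝ),
        o.1 * (s₁ o.1 o.2.1 o.2.2 + s₂ o.2.1 o.2.2 + s₃ o.2.2) * (py o.1 o.2.1 o.2.2 * pta o.2.1 o.2.2 * px o.2.2))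
      = (∫ o : ℝ × ℝ × (Fin d → ℝ),
        w o.2.2 o.2.1 * (o.1 - μ o.2.2 o.2.1) * (s₁ o.1 o.2.1 o.2.2 + s₂ o.2.1 o.2.2 + s₃ o.2.2) * (py o.1 o.2.1 o.2.2 * pa o.2.1 o.2.2 * px o.2.2))
        + (∫ o : ℝ × ℝ × (Fin d → ℝ),
        (μ o.2.2 o.2.1 - ψ) * (s₁ o.1 o.2.1 o.2.2 + s₂ o.2.1 o.2.2 + s₃ o.2.2) * (py o.1 o.2.1 o.2.2 * pta o.2.1 o.2.2 * px o.2.2)) := by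
  rename_i hy_int hw_int hμ_int
  have hw_mul : ∀ a x, w x a * pa a x = pta a x := fun a x => by
    rw [hw_def]; exact ite_div_mul_cancel_of_pos_imp (hpta_nn a x) (hpos a x)
  exact integral_mul_score_eq_weighted_residual_add_centered
    (fun o => by rw [← hw_mul o.2.1 o.2.2]; ring)
    (integral_score_mul_density_eq_zero hpy_one hpta_one hs₁_zero hs₂_zero hs₃_zero)
    hy_int hw_int hμ_int
end

section
/- Let g: ℝ → ℝ be a strictly monotone continuously differentiable bijection whose inverse h = g⁻¹ is differentiable with h'(u) ≥ c₀ > 0 for all u ∈ ℝ. Let n ≥ 1, and let y₁, …, yₙ, μ₁, …, μₙ ∈ ℝ and w₁, …, wₙ ∈ ℝ with δ ≤ wᵢ ≤ M for constants 0 < δ ≤ M. Suppose ε̂ ∈ ℝ satisfies the first-order condition (1/n) Σ_{i=1}^n wᵢ · (yᵢ − h(g(μᵢ) + ε̂ wᵢ)) = 0. Then |ε̂| ≤ (1/(c₀ δ²)) · |(1/n) Σ_{i=1}^n wᵢ (yᵢ − μᵢ)|. -/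
/-!
The perturbation `ε̂ wᵢ` and the induced change `rᵢ = h(g(μᵢ) + ε̂ wᵢ) - μᵢ` of the fitted value
have the same sign, and since `h' ≥ c₀` the mean value theorem gives `ε̂ wᵢ rᵢ ≥ c₀ ε̂² wᵢ² ≥ c₀ δ² ε̂²`.
By the first-order condition `∑ wᵢ rᵢ = ∑ wᵢ (yᵢ - μᵢ) =: S`, so summing yields
`n c₀ δ² ε̂² ≤ ε̂ S ≤ |ε̂| |S|`, and dividing by `n c₀ δ² |ε̂|` gives the bound.
-/

open Finset

theorem mul_sq_sub_le_sub_mul_image_sub_of_le_deriv {f f' : ℝ → ℝ} {c : ℝ}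
    (hf : ∀ x, HasDerivAt f (f' x) x) (hf' : ∀ x, c ≤ f' x) (a b : ℝ) :
    c * (b - a) ^ 2 ≤ (b - a) * (f b - f a) := by
  have hdiff : Differentiable ℝ f := fun x => (hf x).differentiableAt
  have hderiv : ∀ x, c ≤ deriv f x := fun x => (hf x).deriv ▸ hf' x
  rcases le_total a b with hab | hba
  · have := mul_sub_le_image_sub_of_le_deriv hdiff hderiv hab
    nlinarith [sub_nonneg.2 hab]
  · have := mul_sub_le_image_sub_of_le_deriv hdiff hderiv hba
    nlinarith [sub_nonneg.2 hba]

theorem abs_le_abs_div_of_mul_sq_le_mul {ε S k : ℝ} (hk : 0 < k) (h : k * ε ^ 2 ≤ ε * S) :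
    |ε| ≤ |S| / k := by
  rw [le_div_iff₀ hk]
  rcases eq_or_ne ε 0 with rfl | hε
  · simp
  · have hεS : ε * S ≤ |ε| * |S| := (le_abs_self _).trans (abs_mul ε S).le
    have : |ε| * (|ε| * k) ≤ |ε| * |S| := by nlinarith [sq_abs ε]
    exact le_of_mul_le_mul_left this (abs_pos.2 hε)

theorem targeted_regularization_epsilon_bound_general
    (g : ℝ → ℝ) (hg_bij : Function.Bijective g)
    -- the inverse h = g⁻¹ is differentiable with derivative h' ≥ c₀ > 0
    (h' : ℝ → ℝ) (hh : ∀ u : ℝ, HasDerivAt (Function.invFun g) (h' u) u)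
    (c₀ : ℝ) (hc₀ : 0 < c₀) (hh' : ∀ u : ℝ, c₀ ≤ h' u)
    {n : ℕ} (hn : 1 ≤ n)
    (y μv w : Fin n → ℝ)
    (δ M : ℝ) (hδ : 0 < δ)
    (hw : ∀ i, δ ≤ w i ∧ w i ≤ M)
    (εhat : ℝ)
    -- the first-order condition
    (hfoc : (1 / n : ℝ) * ∑ i : Fin n,
        w i * (y i - Function.invFun g (g (μv i) + εhat * w i)) = 0) :
    |εhat| ≤ (1 / (c₀ * δ ^ 2)) * |(1 / n : ℝ) * ∑ i : Fin n, w i * (y i - μv i)| := by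
  set h := Function.invFun g
  have hhg : ∀ x, h (g x) = x := Function.leftInverse_invFun hg_bij.injective
  have hn_pos : (0 : ℝ) < n := by exact_mod_cast hn
  have hterm : ∀ i, c₀ * δ ^ 2 * εhat ^ 2 ≤ εhat * (w i * (h (g (μv i) + εhat * w i) - μv i)) := by
    intro i
    have hmvt := mul_sq_sub_le_sub_mul_image_sub_of_le_deriv hh hh' (g (μv i))
      (g (μv i) + εhat * w i)
    rw [hhg, add_sub_cancel_left] at hmvt
    have hδw : δ ^ 2 ≤ w i ^ 2 := pow_le_pow_left₀ hδ.le (hw i).1 2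
    nlinarith [mul_le_mul_of_nonneg_left hδw (mul_nonneg hc₀.le (sq_nonneg εhat))]
  have hresidual : ∑ i, w i * (h (g (μv i) + εhat * w i) - μv i) = ∑ i, w i * (y i - μv i) := by
    have hfoc : ∑ i, w i * (y i - h (g (μv i) + εhat * w i)) = 0 :=
      (mul_eq_zero.1 hfoc).resolve_left (by positivity)
    rw [← sub_zero (∑ i, w i * (y i - μv i)), ← hfoc, ← sum_sub_distrib]
    exact sum_congr rfl fun i _ => by ring
  have hsum : n * (c₀ * δ ^ 2) * εhat ^ 2 ≤ εhat * ∑ i, w i * (y i - μv i) := by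
    rw [← hresidual, mul_sum]
    simpa [mul_assoc] using sum_le_sum fun i (_ : i ∈ univ) => hterm i
  calc |εhat| ≤ |∑ i, w i * (y i - μv i)| / (n * (c₀ * δ ^ 2)) :=
        abs_le_abs_div_of_mul_sq_le_mul (by positivity) hsum
    _ = _ := by
      rw [abs_mul, abs_of_pos (by positivity : (0 : ℝ) < 1 / n)]
      field_simp

/-- Bound on the fluctuation parameter `ε̂` (Equation `epsilon-bound`) in the proof of
Theorem 2: if `ε̂` is a stationary point of the targeted regularization risk, then `|ε̂|` is
controlled by the weighted empirical residual of the unperturbed outcome model. -/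
theorem targeted_regularization_epsilon_bound
    (g : ℝ → ℝ) (hg_bij : Function.Bijective g)
    (hg_mono : StrictMono g ∨ StrictAnti g) (hg_C1 : ContDiff ℝ 1 g)
    -- the inverse h = g⁻¹ is differentiable with derivative h' ≥ c₀ > 0
    (h' : ℝ → ℝ) (hh : ∀ u : ℝ, HasDerivAt (Function.invFun g) (h' u) u)
    (c₀ : ℝ) (hc₀ : 0 < c₀) (hh' : ∀ u : ℝ, c₀ ≤ h' u)
    {n : ℕ} (hn : 1 ≤ n)
    (y μv w : Fin n → ℝ)
    (δ M : ℝ) (hδ : 0 < δ) (hδM : δ ≤ M)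
    (hw : ∀ i, δ ≤ w i ∧ w i ≤ M)
    (εhat : ℝ)
    -- the first-order condition
    (hfoc : (1 / n : ℝ) * ∑ i : Fin n,
        w i * (y i - Function.invFun g (g (μv i) + εhat * w i)) = 0) :
    |εhat| ≤ (1 / (c₀ * δ ^ 2)) * |(1 / n : ℝ) * ∑ i : Fin n, w i * (y i - μv i)| :=
  targeted_regularization_epsilon_bound_general g hg_bij h' hh c₀ hc₀ hh' hn y μv w δ M hδ hw εhat
    hfoc
end

section
/- Let (Ω, 𝓕, P) be a probability space with random variables X: Ω → ℝ^d, A: Ω → ℝ. Let g: ℝ → ℝ be a strictly monotone continuously differentiable bijection whose inverse h = g⁻¹ is differentiable with |h'(u)| ≤ C for all u ∈ ℝ. Let μ, μ̂, w, ŵ: ℝ^d × ℝ → ℝ be measurable and ε̂ ∈ ℝ, and define μ̃(x, a) = h(g(μ̂(x, a)) + ε̂ ŵ(x, a)). Suppose |ŵ(X, A)| ≤ M, |ŵ(X, A) − w(X, A)| ≤ r₂, and |μ(X, A) − μ̂(X, A)| ≤ r₁ almost surely, with all displayed random variables integrable. Then |E[(ŵ(X, A) − w(X, A)) · (μ(X,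 A) − μ̃(X, A))]| ≤ r₂ r₁ + C · M · r₂ · |ε̂|. -/
open MeasureTheory

/-!
The inverse link `h = g⁻¹` is `C`-Lipschitz by the mean value theorem, so moving the argument
of `h` from `g(μ̂)` to `g(μ̂) + ε̂ ŵ` moves `μ̃` away from `μ̂ = h(g(μ̂))` by at most `C |ε̂| M`.
Hence `|μ − μ̃| ≤ r₁ + C M |ε̂|` almost surely, and the integrand is bounded by
`r₂ (r₁ + C M |ε̂|)`; a probability measure does not enlarge an a.e. bound.
-/

theorem norm_image_sub_le_of_forall_hasDerivAt {𝕜 G : Type*} [RCLike 𝕜] [NormedAddCommGroup G]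
    [NormedSpace 𝕜 G] {f f' : 𝕜 → G} {C : ℝ} (hf : ∀ x, HasDerivAt f (f' x) x)
    (bound : ∀ x, ‖f' x‖ ≤ C) (x y : 𝕜) : ‖f y - f x‖ ≤ C * ‖y - x‖ :=
  convex_univ.norm_image_sub_le_of_norm_hasDerivWithin_le (fun z _ => (hf z).hasDerivWithinAt)
    (fun z _ => bound z) (Set.mem_univ x) (Set.mem_univ y)

theorem abs_sub_invFun_add_le {g : ℝ → ℝ} (hg : Function.Injective g) {C : ℝ}
    (hlip : ∀ u v, |Function.invFun g u - Function.invFun g v| ≤ C * |u - v|) (m δ : ℝ) :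
    |m - Function.invFun g (g m + δ)| ≤ C * |δ| := by
  have hm : Function.invFun g (g m) = m := Function.leftInverse_invFun hg m
  simpa [hm, abs_sub_comm] using hlip (g m) (g m + δ)

theorem abs_mul_sub_le_of_abs_sub_le {a b c t r₁ r₂ δ : ℝ} (ha : |a| ≤ r₂)
    (hbc : |b - c| ≤ r₁) (hct : |c - t| ≤ δ) : |a * (b - t)| ≤ r₂ * (r₁ + δ) := by
  have hbt : |b - t| ≤ r₁ + δ := (abs_sub_le b c t).trans (add_le_add hbc hct)
  rw [abs_mul]
  exact mul_le_mul ha hbt (abs_nonneg _) ((abs_nonneg a).trans ha)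

theorem targeted_regularization_perturbed_product_bias_general
    {Ω : Type*} [MeasurableSpace Ω] (P : Measure Ω) [IsProbabilityMeasure P]
    {d : ℕ} (X : Ω → (Fin d → ℝ)) (A : Ω → ℝ)
    (g : ℝ → ℝ) (hg_bij : Function.Bijective g)
    -- the inverse h = g⁻¹ is differentiable with |h'| ≤ C
    (h' : ℝ → ℝ) (hh : ∀ u : ℝ, HasDerivAt (Function.invFun g) (h' u) u)
    (C : ℝ) (hC : ∀ u : ℝ, |h' u| ≤ C)
    (μ μhat w what : (Fin d → ℝ) → ℝ → ℝ)
    (εhat : ℝ)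
    -- the perturbed outcome model
    (μt : (Fin d → ℝ) → ℝ → ℝ)
    (hμt : ∀ x a, μt x a = Function.invFun g (g (μhat x a) + εhat * what x a))
    (M r₁ r₂ : ℝ)
    (hM : ∀ᵐ ω ∂P, |what (X ω) (A ω)| ≤ M)
    (hr₂ : ∀ᵐ ω ∂P, |what (X ω) (A ω) - w (X ω) (A ω)| ≤ r₂)
    (hr₁ : ∀ᵐ ω ∂P, |μ (X ω) (A ω) - μhat (X ω) (A ω)| ≤ r₁) :
    |∫ ω, (what (X ω) (A ω) - w (X ω) (A ω)) * (μ (X ω) (A ω) - μt (X ω) (A ω)) ∂P|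
      ≤ r₂ * r₁ + C * M * r₂ * |εhat| := by
  have hC0 : 0 ≤ C := (abs_nonneg _).trans (hC 0)
  have hlip (u v : ℝ) : |Function.invFun g u - Function.invFun g v| ≤ C * |u - v| :=
    norm_image_sub_le_of_forall_hasDerivAt hh hC v u
  have hbound : ∀ᵐ ω ∂P,
      ‖(what (X ω) (A ω) - w (X ω) (A ω)) * (μ (X ω) (A ω) - μt (X ω) (A ω))‖
        ≤ r₂ * (r₁ + C * M * |εhat|) := by
    filter_upwards [hM, hr₂, hr₁] with ω hMω hr₂ω hr₁ω
    have hshift : |μhat (X ω) (A ω) - μt (X ω) (A ω)| ≤ C * M * |εhat| := by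
      rw [hμt]
      calc _ ≤ C * |εhat * what (X ω) (A ω)| := abs_sub_invFun_add_le hg_bij.injective hlip _ _
        _ ≤ C * (|εhat| * M) := by
          rw [abs_mul]; gcongr
        _ = C * M * |εhat| := by ring
    exact abs_mul_sub_le_of_abs_sub_le hr₂ω hr₁ω hshift
  calc _ ≤ r₂ * (r₁ + C * M * |εhat|) * P.real Set.univ := norm_integral_le_of_norm_le_const hbound
    _ = r₂ * r₁ + C * M * r₂ * |εhat| := by rw [probReal_univ, mul_one]; ring

/-- Mean-value-theorem bound (Equation `check-mate`) in the proof of Theorem 2: the product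
bias with the perturbed outcome model `μ̃ = g⁻¹(g(μ̂) + ε̂ ŵ)` exceeds the usual product bias
`‖ŵ − w‖_∞ ‖μ − μ̂‖_∞` by at most a term proportional to `‖ŵ − w‖_∞ |ε̂|`. -/
theorem targeted_regularization_perturbed_product_bias
    {Ω : Type*} [MeasurableSpace Ω] (P : Measure Ω) [IsProbabilityMeasure P]
    {d : ℕ} (X : Ω → (Fin d → ℝ)) (A : Ω → ℝ)
    (hX : Measurable X) (hA : Measurable A)
    (g : ℝ → ℝ) (hg_bij : Function.Bijective g)
    (hg_mono : StrictMono g ∨ StrictAnti g) (hg_C1 : ContDiff ℝ 1 g)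
    -- the inverse h = g⁻¹ is differentiable with |h'| ≤ C
    (h' : ℝ → ℝ) (hh : ∀ u : ℝ, HasDerivAt (Function.invFun g) (h' u) u)
    (C : ℝ) (hC : ∀ u : ℝ, |h' u| ≤ C)
    (μ μhat w what : (Fin d → ℝ) → ℝ → ℝ)
    (hμ_meas : Measurable (Function.uncurry μ))
    (hμhat_meas : Measurable (Function.uncurry μhat))
    (hw_meas : Measurable (Function.uncurry w))
    (hwhat_meas : Measurable (Function.uncurry what))
    (εhat : ℝ)
    -- the perturbed outcome model
    (μt : (Fin d → ℝ) → ℝ → ℝ)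
    (hμt : ∀ x a, μt x a = Function.invFun g (g (μhat x a) + εhat * what x a))
    (M r₁ r₂ : ℝ)
    (hM : ∀ᵐ ω ∂P, |what (X ω) (A ω)| ≤ M)
    (hr₂ : ∀ᵐ ω ∂P, |what (X ω) (A ω) - w (X ω) (A ω)| ≤ r₂)
    (hr₁ : ∀ᵐ ω ∂P, |μ (X ω) (A ω) - μhat (X ω) (A ω)| ≤ r₁)
    -- integrability of the displayed random variables
    (h_int : Integrable (fun ω =>
      (what (X ω) (A ω) - w (X ω) (A ω)) * (μ (X ω) (A ω) - μt (X ω) (A ω))) P)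
    (h_int' : Integrable (fun ω =>
      (what (X ω) (A ω) - w (X ω) (A ω)) * (μ (X ω) (A ω) - μhat (X ω) (A ω))) P)
    (h_int'' : Integrable (fun ω => μt (X ω) (A ω)) P) :
    |∫ ω, (what (X ω) (A ω) - w (X ω) (A ω)) * (μ (X ω) (A ω) - μt (X ω) (A ω)) ∂P|
      ≤ r₂ * r₁ + C * M * r₂ * |εhat| :=
  targeted_regularization_perturbed_product_bias_general P X A g hg_bij h' hh C hC μ μhat w what
    εhat μt hμt M r₁ r₂ hM hr₂ hr₁
end

section
/- Let (Ω, 𝓕, P) be a probability space with X: Ω → ℝ^d, A, Ã: Ω → ℝ, Y: Ω → ℝ integrable; let μ(X, A) be a version of E[Y | σ(X, A)]; let w(x,·) be the density of the conditional law of Ã given X = x with respect to the conditional law of A given X = x, and ψ = E[μ(X, Ã)]. Let g: ℝ → ℝ be a strictly monotone C¹ bijection whose inverse h = g⁻¹ is differentiable with c₀ ≤ h'(u) ≤ C for all u, with c₀ > 0. Let μ̂, ŵ be measurable with δ ≤ ŵ ≤ M pointwise (0 < δ ≤ M), |ŵ(X,A) − w(X,A)| ≤ r₂ a.s., |μ(X,A)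 − μ̂(X,A)| ≤ r₁ a.s., and all displayed expectations finite. Let ε̂ ∈ ℝ, μ̃(x,a) = h(g(μ̂(x,a)) + ε̂ ŵ(x,a)), and sample points (xᵢ, aᵢ, ãᵢ, yᵢ), i = 1, …, n, satisfy (1/n) Σᵢ ŵ(xᵢ,aᵢ)(yᵢ − μ̃(xᵢ,aᵢ)) = 0; set ψ̂ = (1/n) Σᵢ μ̃(xᵢ, ãᵢ). Define D₁ = (1/n) Σᵢ [μ̃(xᵢ,ãᵢ) + ŵ(xᵢ,aᵢ)(yᵢ − μ̃(xᵢ,aᵢ))] − E[μ̃(X,Ã) + ŵ(X,A)(Y − μ̃(X,A))] and D₂ = (1/n) Σᵢ ŵ(xᵢ,aᵢ)(yᵢ − μ̂(xᵢ,aᵢ)) − E[ŵ(X,A)(Y − μ̂(X,A))]. Then |ψ̂ − ψ| ≤ |D₁| + r₁ r₂ + (C M r₂ / (c₀ δ²)) · (|D₂| + M r₁). -/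
open MeasureTheory ProbabilityTheory Finset

/-!
Write `h = g⁻¹`, so that `μ̃ - μ̂ = h (g μ̂ + ε̂ ŵ) - h (g μ̂)`. Since `h' ≤ C`, `h` is
`C`-Lipschitz and `|μ̃ - μ̂| ≤ C M |ε̂|`; since `h' ≥ c₀ > 0`, `h` is strongly monotone and
`ε̂ ŵ (μ̃ - μ̂) ≥ c₀ δ² ε̂²` pointwise. Averaging the latter over the sample and subtracting the
first-order condition bounds `c₀ δ² |ε̂|` by the empirical mean of `ŵ (y - μ̂)`, which is `D₂`
plus `E[ŵ (Y - μ̂)] = E[ŵ (μ - μ̂)]`, a quantity of size at most `M r₁`.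

The first-order condition also turns `ψ̂` into the one-step average, whence the exact
decomposition `ψ̂ - ψ = D₁ + E[(ŵ - w)(μ - μ̃)]`: the tower property replaces `Y` by `μ(X, A)`
against the `σ(X, A)`-measurable weight `ŵ`, and the density `w` turns `E[φ(X, Ã)]` into
`E[w φ(X, A)]`. The remaining product bias is at most `r₂ (r₁ + C M |ε̂|)`.
-/

section LinkFunction

variable {f f' : ℝ → ℝ}

theorem mul_sq_le_image_sub_mul {c : ℝ} (hf : ∀ u, HasDerivAt f (f' u) u) (hc : ∀ u, c ≤ f' u)
    (x y : ℝ) : c * (y - x) ^ 2 ≤ (f y - f x) * (y - x) := by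
  have hdiff : Differentiable ℝ f := fun u => (hf u).differentiableAt
  have hderiv : ∀ u, c ≤ deriv f u := fun u => (hf u).deriv ▸ hc u
  rcases le_total x y with hxy | hyx
  · nlinarith [mul_sub_le_image_sub_of_le_deriv hdiff hderiv hxy, sub_nonneg.2 hxy]
  · nlinarith [mul_sub_le_image_sub_of_le_deriv hdiff hderiv hyx, sub_nonneg.2 hyx]

theorem mul_sq_mul_sq_le_mul_mul_image_add_mul_sub {c δ w : ℝ} (hf : ∀ u, HasDerivAt f (f' u) u)
    (hc : ∀ u, c ≤ f' u) (hc₀ : 0 ≤ c) (hδ : 0 ≤ δ) (hw : δ ≤ w) (s ε : ℝ) :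
    c * δ ^ 2 * ε ^ 2 ≤ ε * (w * (f (s + ε * w) - f s)) := by
  have hmono := mul_sq_le_image_sub_mul hf hc s (s + ε * w)
  rw [add_sub_cancel_left] at hmono
  have hδw : c * δ ^ 2 * ε ^ 2 ≤ c * w ^ 2 * ε ^ 2 := by gcongr
  nlinarith

theorem abs_image_add_mul_sub_le {C M w : ℝ} (hf : ∀ u, HasDerivAt f (f' u) u)
    (hC : ∀ u, |f' u| ≤ C) (hw : |w| ≤ M) (s ε : ℝ) :
    |f (s + ε * w) - f s| ≤ C * M * |ε| := by
  have hlip : |f (s + ε * w) - f s| ≤ C * |s + ε * w - s| :=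
    convex_univ.norm_image_sub_le_of_norm_hasDerivWithin_le
      (fun u _ => (hf u).hasDerivWithinAt) (fun u _ => hC u) trivial trivial
  have hC₀ : 0 ≤ C := (abs_nonneg _).trans (hC 0)
  calc |f (s + ε * w) - f s| ≤ C * (|ε| * |w|) := by rwa [add_sub_cancel_left, abs_mul] at hlip
    _ ≤ C * (|ε| * M) := by gcongr
    _ = C * M * |ε| := by ring

end LinkFunction

theorem mul_abs_le_abs_of_mul_sq_le {κ ε z : ℝ} (h : κ * ε ^ 2 ≤ ε * z) : κ * |ε| ≤ |z| := by
  rcases eq_or_ne ε 0 with rfl | hε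
  · simp
  refine le_of_mul_le_mul_right ?_ (abs_pos.2 hε)
  calc κ * |ε| * |ε| = κ * ε ^ 2 := by rw [mul_assoc, ← sq, sq_abs]
    _ ≤ ε * z := h
    _ ≤ |ε * z| := le_abs_self _
    _ = |z| * |ε| := by rw [abs_mul, mul_comm]

theorem mul_abs_le_abs_average {n : ℕ} (hn : 0 < n) {κ ε : ℝ} {z : Fin n → ℝ}
    (h : ∀ i, κ * ε ^ 2 ≤ ε * z i) : κ * |ε| ≤ |(1 / n : ℝ) * ∑ i, z i| := by
  refine mul_abs_le_abs_of_mul_sq_le ?_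
  calc κ * ε ^ 2 = (1 / n : ℝ) * ∑ _i : Fin n, κ * ε ^ 2 := by
        rw [sum_const, card_univ, Fintype.card_fin, nsmul_eq_mul]; field_simp
    _ ≤ (1 / n : ℝ) * ∑ i, ε * z i :=
        mul_le_mul_of_nonneg_left (sum_le_sum fun i _ => h i) (by positivity)
    _ = ε * ((1 / n : ℝ) * ∑ i, z i) := by rw [← mul_sum]; ring

theorem mul_abs_le_abs_average_mul_sub_of_average_mul_sub_eq_zero {n : ℕ} (hn : 0 < n) {κ ε : ℝ}
    {w m₀ m₁ y : Fin n → ℝ} (hfoc : (1 / n : ℝ) * ∑ i, w i * (y i - m₁ i) = 0)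
    (h : ∀ i, κ * ε ^ 2 ≤ ε * (w i * (m₁ i - m₀ i))) :
    κ * |ε| ≤ |(1 / n : ℝ) * ∑ i, w i * (y i - m₀ i)| := by
  have hsplit : (1 / n : ℝ) * ∑ i, w i * (y i - m₀ i) = (1 / n : ℝ) * ∑ i, w i * (m₁ i - m₀ i) := by
    rw [← sub_zero ((1 / n : ℝ) * ∑ i, w i * (y i - m₀ i)), ← hfoc, ← mul_sub, ← sum_sub_distrib]
    congr 2 with i
    ring
  exact hsplit ▸ mul_abs_le_abs_average hn h

section ChangeOfMeasure

variable {α β : Type*} [MeasurableSpace α] [MeasurableSpace β] {π : Measure α} [SFinite π]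
  {κ ν : Kernel α β} [IsSFiniteKernel κ] [IsSFiniteKernel ν] {w : α → β → ℝ}

theorem integral_compProd_eq_integral_compProd_mul (hw : Measurable (Function.uncurry w))
    (hwnn : ∀ x a, 0 ≤ w x a)
    (hac : ∀ᵐ x ∂π, ν x = (κ x).withDensity (fun a => ENNReal.ofReal (w x a))) (φ : α × β → ℝ) :
    ∫ p, φ p ∂(π.compProd ν) = ∫ p, w p.1 p.2 * φ p ∂(π.compProd κ) := by
  have hw' : Measurable (Function.uncurry fun x a => (Real.toNNReal (w x a) : ENNReal)) :=
    measurable_coe_nnreal_ennreal.comp hw.real_toNNReal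
  have hν : ν =ᵐ[π] κ.withDensity (fun x a => (Real.toNNReal (w x a) : ENNReal)) := by
    filter_upwards [hac] with x hx
    rw [Kernel.withDensity_apply _ hw', hx]
    rfl
  rw [Measure.compProd_congr hν, Measure.compProd_withDensity hw',
    integral_withDensity_eq_integral_smul (f := fun p : α × β => (w p.1 p.2).toNNReal)
      hw.real_toNNReal]
  congr with p
  rw [NNReal.smul_def, Real.coe_toNNReal _ (hwnn _ _), smul_eq_mul]

end ChangeOfMeasure

theorem abs_integral_mul_le_of_ae_abs_le {Ω : Type*} [MeasurableSpace Ω] {P : Measure Ω}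
    [IsProbabilityMeasure P] {F G : Ω → ℝ} {a b : ℝ} (hF : ∀ᵐ ω ∂P, |F ω| ≤ a)
    (hG : ∀ᵐ ω ∂P, |G ω| ≤ b) : |∫ ω, F ω * G ω ∂P| ≤ a * b := by
  have ha : 0 ≤ a := hF.exists.elim fun _ h => (abs_nonneg _).trans h
  have hFG : ∀ᵐ ω ∂P, ‖F ω * G ω‖ ≤ a * b := by
    filter_upwards [hF, hG] with ω hFω hGω
    rw [Real.norm_eq_abs, abs_mul]
    exact mul_le_mul hFω hGω (abs_nonneg _) ha
  simpa using norm_integral_le_of_norm_le_const hFG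

theorem integral_mul_sub_eq_integral_mul_sub_of_ae_eq_condExp {Ω : Type*} {m m₀ : MeasurableSpace Ω}
    {P : Measure Ω} (hm : m ≤ m₀) [SigmaFinite (P.trim hm)] {F Y μY Z : Ω → ℝ} {c : ℝ}
    (hF : StronglyMeasurable[m] F) (hFc : ∀ᵐ ω ∂P, ‖F ω‖ ≤ c) (hY : Integrable Y P)
    (hμY : μY =ᵐ[P] P[Y | m]) (hZ : Integrable (fun ω => F ω * (Y ω - Z ω)) P) :
    ∫ ω, F ω * (Y ω - Z ω) ∂P = ∫ ω, F ω * (μY ω - Z ω) ∂P := by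
  have hF₀ : AEStronglyMeasurable F P := (hF.mono hm).aestronglyMeasurable
  have hFY : Integrable (fun ω => F ω * Y ω) P := hY.bdd_mul hF₀ hFc
  have hFμY : Integrable (fun ω => F ω * μY ω) P :=
    (integrable_condExp (m := m) (f := Y) |>.bdd_mul hF₀ hFc).congr
      (hμY.mono fun ω hω => by simp only [hω])
  have hFZ : Integrable (fun ω => F ω * Z ω) P :=
    (hFY.sub hZ).congr (ae_of_all _ fun ω => by simp only [Pi.sub_apply]; ring)
  have hpull : ∫ ω, F ω * Y ω ∂P = ∫ ω, F ω * μY ω ∂P :=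
    calc ∫ ω, F ω * Y ω ∂P = ∫ ω, (P[F * Y | m]) ω ∂P := (integral_condExp hm).symm
      _ = ∫ ω, F ω * μY ω ∂P := integral_congr_ae <|
        (condExp_mul_of_stronglyMeasurable_left hF hFY hY).trans
          (hμY.mono fun ω hω => by simp only [Pi.mul_apply, hω])
  simp only [mul_sub]
  rw [integral_sub hFY hFZ, integral_sub hFμY hFZ, hpull]

section Model

variable {Ω α β : Type*} [MeasurableSpace Ω] [MeasurableSpace α] [MeasurableSpace β]
  {P : Measure Ω} {X : Ω → α} {A Atil : Ω → β}

theorem integral_comp_eq_integral_mul_comp {π : Measure α} [SFinite π]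
    {κ ν : Kernel α β} [IsSFiniteKernel κ] [IsSFiniteKernel ν] {w φ : α → β → ℝ}
    (hX : Measurable X) (hA : Measurable A) (hAtil : Measurable Atil)
    (hκ : P.map (fun ω => (X ω, A ω)) = π.compProd κ)
    (hν : P.map (fun ω => (X ω, Atil ω)) = π.compProd ν)
    (hw : Measurable (Function.uncurry w)) (hwnn : ∀ x a, 0 ≤ w x a)
    (hac : ∀ᵐ x ∂π, ν x = (κ x).withDensity (fun a => ENNReal.ofReal (w x a)))
    (hφ : Measurable (Function.uncurry φ)) :
    ∫ ω, φ (X ω) (Atil ω) ∂P = ∫ ω, w (X ω) (A ω) * φ (X ω) (A ω) ∂P := by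
  have hwφ : Measurable fun p : α × β => w p.1 p.2 * φ p.1 p.2 := hw.mul hφ
  rw [← integral_map (φ := fun ω => (X ω, Atil ω)) (f := fun p => φ p.1 p.2)
      (hX.prodMk hAtil).aemeasurable hφ.aestronglyMeasurable,
    ← integral_map (φ := fun ω => (X ω, A ω)) (f := fun p => w p.1 p.2 * φ p.1 p.2)
      (hX.prodMk hA).aemeasurable hwφ.aestronglyMeasurable, hκ, hν]
  exact integral_compProd_eq_integral_compProd_mul hw hwnn hac _

theorem integral_mul_sub_eq_integral_mul_sub_of_ae_eq_condExp_comap [IsFiniteMeasure P]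
    {Y Z : Ω → ℝ} {μ f : α → β → ℝ} {c : ℝ} (hX : Measurable X) (hA : Measurable A)
    (hY : Integrable Y P)
    (hμ : (fun ω => μ (X ω) (A ω)) =ᵐ[P]
      P[Y | MeasurableSpace.comap (fun ω => (X ω, A ω)) inferInstance])
    (hf : Measurable (Function.uncurry f)) (hfc : ∀ x a, |f x a| ≤ c)
    (hZ : Integrable (fun ω => f (X ω) (A ω) * (Y ω - Z ω)) P) :
    ∫ ω, f (X ω) (A ω) * (Y ω - Z ω) ∂P = ∫ ω, f (X ω) (A ω) * (μ (X ω) (A ω) - Z ω) ∂P :=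
  integral_mul_sub_eq_integral_mul_sub_of_ae_eq_condExp (hX.prodMk hA).comap_le
    (hf.comp (comap_measurable _)).stronglyMeasurable (ae_of_all _ fun _ => hfc _ _) hY hμ hZ

variable {Y : Ω → ℝ} {μ w what μt μhat : α → β → ℝ} {n : ℕ} {x : Fin n → α} {a ta : Fin n → β}
  {y : Fin n → ℝ}

theorem average_sub_integral_eq_add_integral_mul [IsFiniteMeasure P] {π : Measure α} [SFinite π]
    {κ ν : Kernel α β} [IsSFiniteKernel κ] [IsSFiniteKernel ν] {M : ℝ}
    (hX : Measurable X) (hA : Measurable A) (hAtil : Measurable Atil) (hY : Integrable Y P)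
    (hμ : Measurable (Function.uncurry μ))
    (hμY : (fun ω => μ (X ω) (A ω)) =ᵐ[P]
      P[Y | MeasurableSpace.comap (fun ω => (X ω, A ω)) inferInstance])
    (hκ : P.map (fun ω => (X ω, A ω)) = π.compProd κ)
    (hν : P.map (fun ω => (X ω, Atil ω)) = π.compProd ν)
    (hw : Measurable (Function.uncurry w)) (hwnn : ∀ x a, 0 ≤ w x a)
    (hac : ∀ᵐ x ∂π, ν x = (κ x).withDensity (fun a => ENNReal.ofReal (w x a)))
    (hwhat : Measurable (Function.uncurry what)) (hwhatM : ∀ x a, |what x a| ≤ M)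
    (hμt : Measurable (Function.uncurry μt))
    (hμAtil : Integrable (fun ω => μ (X ω) (Atil ω)) P)
    (hμtAtil : Integrable (fun ω => μt (X ω) (Atil ω)) P)
    (hres : Integrable (fun ω => what (X ω) (A ω) * (Y ω - μt (X ω) (A ω))) P)
    (hwhat_res : Integrable (fun ω => what (X ω) (A ω) * (μ (X ω) (A ω) - μt (X ω) (A ω))) P)
    (hw_res : Integrable (fun ω => w (X ω) (A ω) * (μ (X ω) (A ω) - μt (X ω) (A ω))) P)
    (hfoc : (1 / n : ℝ) * ∑ i, what (x i) (a i) * (y i - μt (x i) (a i)) = 0) :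
    (1 / n : ℝ) * ∑ i, μt (x i) (ta i) - ∫ ω, μ (X ω) (Atil ω) ∂P =
      ((1 / n : ℝ) * ∑ i, (μt (x i) (ta i) + what (x i) (a i) * (y i - μt (x i) (a i)))
        - ∫ ω, (μt (X ω) (Atil ω) + what (X ω) (A ω) * (Y ω - μt (X ω) (A ω))) ∂P)
      + ∫ ω, (what (X ω) (A ω) - w (X ω) (A ω)) * (μ (X ω) (A ω) - μt (X ω) (A ω)) ∂P := by
  have htower :=
    integral_mul_sub_eq_integral_mul_sub_of_ae_eq_condExp_comap hX hA hY hμY hwhat hwhatM hres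
  have hchange := integral_comp_eq_integral_mul_comp hX hA hAtil hκ hν hw hwnn hac
    (φ := fun x a => μ x a - μt x a) (hμ.sub hμt)
  rw [integral_sub hμAtil hμtAtil] at hchange
  have hbias : ∫ ω, (what (X ω) (A ω) - w (X ω) (A ω)) * (μ (X ω) (A ω) - μt (X ω) (A ω)) ∂P =
      ∫ ω, what (X ω) (A ω) * (μ (X ω) (A ω) - μt (X ω) (A ω)) ∂P
        - ∫ ω, w (X ω) (A ω) * (μ (X ω) (A ω) - μt (X ω) (A ω)) ∂P := by
    simp only [sub_mul]
    exact integral_sub hwhat_res hw_res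
  rw [sum_add_distrib, mul_add, hfoc, integral_add hμtAtil hres]
  linarith

theorem mul_abs_le_abs_sub_integral_add [IsProbabilityMeasure P] {κ ε M r₁ : ℝ}
    (hX : Measurable X) (hA : Measurable A) (hY : Integrable Y P)
    (hμY : (fun ω => μ (X ω) (A ω)) =ᵐ[P]
      P[Y | MeasurableSpace.comap (fun ω => (X ω, A ω)) inferInstance])
    (hwhat : Measurable (Function.uncurry what)) (hwhatM : ∀ x a, |what x a| ≤ M)
    (hr₁ : ∀ᵐ ω ∂P, |μ (X ω) (A ω) - μhat (X ω) (A ω)| ≤ r₁)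
    (hres : Integrable (fun ω => what (X ω) (A ω) * (Y ω - μhat (X ω) (A ω))) P)
    (hn : 0 < n) (hfoc : (1 / n : ℝ) * ∑ i, what (x i) (a i) * (y i - μt (x i) (a i)) = 0)
    (hmono : ∀ x a, κ * ε ^ 2 ≤ ε * (what x a * (μt x a - μhat x a))) :
    κ * |ε| ≤ |(1 / n : ℝ) * ∑ i, what (x i) (a i) * (y i - μhat (x i) (a i))
      - ∫ ω, what (X ω) (A ω) * (Y ω - μhat (X ω) (A ω)) ∂P| + M * r₁ := by
  have hempirical := mul_abs_le_abs_average_mul_sub_of_average_mul_sub_eq_zero hn hfoc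
    fun i => hmono (x i) (a i)
  have hpopulation : |∫ ω, what (X ω) (A ω) * (Y ω - μhat (X ω) (A ω)) ∂P| ≤ M * r₁ := by
    rw [integral_mul_sub_eq_integral_mul_sub_of_ae_eq_condExp_comap hX hA hY hμY hwhat hwhatM hres]
    exact abs_integral_mul_le_of_ae_abs_le (ae_of_all _ fun _ => hwhatM _ _) hr₁
  linarith [abs_sub_abs_le_abs_sub ((1 / n : ℝ) * ∑ i, what (x i) (a i) * (y i - μhat (x i) (a i)))
    (∫ ω, what (X ω) (A ω) * (Y ω - μhat (X ω) (A ω)) ∂P)]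

end Model

theorem targeted_regularization_error_bound_general
    {Ω : Type*} [MeasurableSpace Ω] (P : Measure Ω) [IsProbabilityMeasure P]
    {d : ℕ} (X : Ω → (Fin d → ℝ)) (A Atil : Ω → ℝ) (Y : Ω → ℝ)
    (hX : Measurable X) (hA : Measurable A) (hAtil : Measurable Atil)
    (hYint : Integrable Y P)
    -- `μ(X, A)` is a version of `E[Y | σ(X, A)]`
    (μ : (Fin d → ℝ) → ℝ → ℝ) (hμ : Measurable (Function.uncurry μ))
    (hμver : (fun ω => μ (X ω) (A ω)) =ᵐ[P]
      P[Y | MeasurableSpace.comap (fun ω => (X ω, A ω)) inferInstance])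
    -- `w(x, ·)` is the density of the conditional law of `Ã` given `X = x` with respect to
    -- the conditional law of `A` given `X = x`
    (κ ν : Kernel (Fin d → ℝ) ℝ) [IsMarkovKernel κ] [IsMarkovKernel ν]
    (hκ : Measure.map (fun ω => (X ω, A ω)) P = (Measure.map X P).compProd κ)
    (hν : Measure.map (fun ω => (X ω, Atil ω)) P = (Measure.map X P).compProd ν)
    (w : (Fin d → ℝ) → ℝ → ℝ) (hw : Measurable (Function.uncurry w))
    (hwnn : ∀ x a, 0 ≤ w x a)
    (hac : ∀ᵐ x ∂(Measure.map X P),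
      ν x = (κ x).withDensity (fun a => ENNReal.ofReal (w x a)))
    -- the link function: strictly monotone C¹ bijection with inverse `h = g⁻¹`
    -- differentiable and `c₀ ≤ h' ≤ C`, `c₀ > 0`
    (g : ℝ → ℝ) (hg_bij : Function.Bijective g)
    (hg_C1 : ContDiff ℝ 1 g)
    (h' : ℝ → ℝ) (hh : ∀ u : ℝ, HasDerivAt (Function.invFun g) (h' u) u)
    (c₀ C : ℝ) (hc₀ : 0 < c₀) (hh' : ∀ u : ℝ, c₀ ≤ h' u ∧ h' u ≤ C)
    -- the nuisance estimators and their error bounds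
    (μhat what : (Fin d → ℝ) → ℝ → ℝ)
    (hμhat_meas : Measurable (Function.uncurry μhat))
    (hwhat_meas : Measurable (Function.uncurry what))
    (δ M : ℝ) (hδ : 0 < δ)
    (hwhat_bdd : ∀ x a, δ ≤ what x a ∧ what x a ≤ M)
    (r₁ r₂ : ℝ)
    (hr₂ : ∀ᵐ ω ∂P, |what (X ω) (A ω) - w (X ω) (A ω)| ≤ r₂)
    (hr₁ : ∀ᵐ ω ∂P, |μ (X ω) (A ω) - μhat (X ω) (A ω)| ≤ r₁)
    -- the fluctuation parameter and perturbed outcome model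
    (εhat : ℝ) (μt : (Fin d → ℝ) → ℝ → ℝ)
    (hμt : ∀ x a, μt x a = Function.invFun g (g (μhat x a) + εhat * what x a))
    -- all displayed expectations are finite
    (hμAtil_int : Integrable (fun ω => μ (X ω) (Atil ω)) P)
    (hμtAtil_int : Integrable (fun ω => μt (X ω) (Atil ω)) P)
    (hres_int : Integrable (fun ω => what (X ω) (A ω) * (Y ω - μt (X ω) (A ω))) P)
    (hres_int' : Integrable (fun ω => what (X ω) (A ω) * (Y ω - μhat (X ω) (A ω))) P)
    (hres_int'' : Integrable (fun ω =>
      what (X ω) (A ω) * (μ (X ω) (A ω) - μt (X ω) (A ω))) P)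
    (hres_int'''' : Integrable (fun ω =>
      w (X ω) (A ω) * (μ (X ω) (A ω) - μt (X ω) (A ω))) P)
    -- sample points and the first-order condition
    {n : ℕ} (hn : 1 ≤ n)
    (x : Fin n → (Fin d → ℝ)) (a ta y : Fin n → ℝ)
    (hfoc : (1 / n : ℝ) * ∑ i : Fin n, what (x i) (a i) * (y i - μt (x i) (a i)) = 0)
    -- the plugin estimator, the estimand and the empirical-process terms
    (ψhat ψ D₁ D₂ : ℝ)
    (hψhat : ψhat = (1 / n : ℝ) * ∑ i : Fin n, μt (x i) (ta i))
    (hψ : ψ = ∫ ω, μ (X ω) (Atil ω) ∂P)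
    (hD₁ : D₁ = (1 / n : ℝ) * ∑ i : Fin n,
        (μt (x i) (ta i) + what (x i) (a i) * (y i - μt (x i) (a i)))
      - ∫ ω, (μt (X ω) (Atil ω) + what (X ω) (A ω) * (Y ω - μt (X ω) (A ω))) ∂P)
    (hD₂ : D₂ = (1 / n : ℝ) * ∑ i : Fin n, what (x i) (a i) * (y i - μhat (x i) (a i))
      - ∫ ω, what (X ω) (A ω) * (Y ω - μhat (X ω) (A ω)) ∂P) :
    |ψhat - ψ| ≤ |D₁| + r₁ * r₂ + (C * M * r₂ / (c₀ * δ ^ 2)) * (|D₂| + M * r₁) := by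
  have hh_abs : ∀ u, |h' u| ≤ C := fun u => abs_le.2 ⟨by linarith [hh' u], (hh' u).2⟩
  have hwhatM : ∀ x a, |what x a| ≤ M := fun x a =>
    abs_le.2 ⟨by linarith [hwhat_bdd x a], (hwhat_bdd x a).2⟩
  have hμt_sub : ∀ x a, μt x a - μhat x a =
      Function.invFun g (g (μhat x a) + εhat * what x a) - Function.invFun g (g (μhat x a)) :=
    fun x a => by rw [hμt, Function.leftInverse_invFun hg_bij.injective]
  have hμt_meas : Measurable (Function.uncurry μt) := by
    have hh_cont : Continuous (Function.invFun g) :=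
      continuous_iff_continuousAt.2 fun u => (hh u).continuousAt
    rw [show Function.uncurry μt = _ from funext fun p => hμt p.1 p.2]
    exact hh_cont.measurable.comp
      ((hg_C1.continuous.measurable.comp hμhat_meas).add (hwhat_meas.const_mul εhat))
  have hlip : ∀ x a, |μt x a - μhat x a| ≤ C * M * |εhat| := fun x a =>
    hμt_sub x a ▸ abs_image_add_mul_sub_le hh hh_abs (hwhatM x a) _ _
  have hmono : ∀ x a, c₀ * δ ^ 2 * εhat ^ 2 ≤ εhat * (what x a * (μt x a - μhat x a)) :=
    fun x a => hμt_sub x a ▸ mul_sq_mul_sq_le_mul_mul_image_add_mul_sub hh (fun u => (hh' u).1)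
      hc₀.le hδ.le (hwhat_bdd x a).1 _ _
  have hε : c₀ * δ ^ 2 * |εhat| ≤ |D₂| + M * r₁ := hD₂ ▸
    mul_abs_le_abs_sub_integral_add hX hA hYint hμver hwhat_meas hwhatM hr₁ hres_int' hn hfoc hmono
  have hdecomp : ψhat - ψ = D₁ + ∫ ω,
      (what (X ω) (A ω) - w (X ω) (A ω)) * (μ (X ω) (A ω) - μt (X ω) (A ω)) ∂P := by
    rw [hψhat, hψ, hD₁]
    exact average_sub_integral_eq_add_integral_mul hX hA hAtil hYint hμ hμver hκ hν hw hwnn hac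
      hwhat_meas hwhatM hμt_meas hμAtil_int hμtAtil_int hres_int hres_int'' hres_int'''' hfoc
  have hbias := abs_integral_mul_le_of_ae_abs_le hr₂ (hr₁.mono fun ω h₁ =>
    (abs_sub_le _ (μhat (X ω) (A ω)) _).trans (add_le_add h₁ (abs_sub_comm (μt _ _) _ ▸ hlip _ _)))
  have hC : 0 ≤ C := (abs_nonneg _).trans (hh_abs 0)
  have hM : 0 ≤ M := (abs_nonneg _).trans (hwhatM 0 0)
  have hr₂₀ : 0 ≤ r₂ := hr₂.exists.elim fun _ h => (abs_nonneg _).trans h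
  have hc₀δ : c₀ * δ ^ 2 ≠ 0 := by positivity
  calc |ψhat - ψ| ≤ |D₁| + r₂ * (r₁ + C * M * |εhat|) := by
        rw [hdecomp]
        exact (abs_add_le _ _).trans (add_le_add_right hbias _)
    _ = |D₁| + r₁ * r₂ + (C * M * r₂ / (c₀ * δ ^ 2)) * (c₀ * δ ^ 2 * |εhat|) := by
        field_simp
        ring
    _ ≤ _ := by gcongr

/-- Deterministic core of Theorem 2 (statement 2): combining the exact error decomposition,
the mean-value-theorem bound on the perturbed product bias, the bound on the fluctuation
parameter `ε̂` and the tower-property rewriting, the targeted-regularization plugin estimator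
satisfies `|ψ̂ − ψ| ≤ |D₁| + r₁ r₂ + (C M r₂ / (c₀ δ²)) (|D₂| + M r₁)`. -/
theorem targeted_regularization_error_bound
    {Ω : Type*} [MeasurableSpace Ω] (P : Measure Ω) [IsProbabilityMeasure P]
    {d : ℕ} (X : Ω → (Fin d → ℝ)) (A Atil : Ω → ℝ) (Y : Ω → ℝ)
    (hX : Measurable X) (hA : Measurable A) (hAtil : Measurable Atil) (hY : Measurable Y)
    (hYint : Integrable Y P)
    -- `μ(X, A)` is a version of `E[Y | σ(X, A)]`
    (μ : (Fin d → ℝ) → ℝ → ℝ) (hμ : Measurable (Function.uncurry μ))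
    (hμver : (fun ω => μ (X ω) (A ω)) =ᵐ[P]
      P[Y | MeasurableSpace.comap (fun ω => (X ω, A ω)) inferInstance])
    -- `w(x, ·)` is the density of the conditional law of `Ã` given `X = x` with respect to
    -- the conditional law of `A` given `X = x`
    (κ ν : Kernel (Fin d → ℝ) ℝ) [IsMarkovKernel κ] [IsMarkovKernel ν]
    (hκ : Measure.map (fun ω => (X ω, A ω)) P = (Measure.map X P).compProd κ)
    (hν : Measure.map (fun ω => (X ω, Atil ω)) P = (Measure.map X P).compProd ν)
    (w : (Fin d → ℝ) → ℝ → ℝ) (hw : Measurable (Function.uncurry w))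
    (hwnn : ∀ x a, 0 ≤ w x a)
    (hac : ∀ᵐ x ∂(Measure.map X P),
      ν x = (κ x).withDensity (fun a => ENNReal.ofReal (w x a)))
    -- the link function: strictly monotone C¹ bijection with inverse `h = g⁻¹`
    -- differentiable and `c₀ ≤ h' ≤ C`, `c₀ > 0`
    (g : ℝ → ℝ) (hg_bij : Function.Bijective g)
    (hg_mono : StrictMono g ∨ StrictAnti g) (hg_C1 : ContDiff ℝ 1 g)
    (h' : ℝ → ℝ) (hh : ∀ u : ℝ, HasDerivAt (Function.invFun g) (h' u) u)
    (c₀ C : ℝ) (hc₀ : 0 < c₀) (hh' : ∀ u : ℝ, c₀ ≤ h' u ∧ h' u ≤ C)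
    -- the nuisance estimators and their error bounds
    (μhat what : (Fin d → ℝ) → ℝ → ℝ)
    (hμhat_meas : Measurable (Function.uncurry μhat))
    (hwhat_meas : Measurable (Function.uncurry what))
    (δ M : ℝ) (hδ : 0 < δ) (hδM : δ ≤ M)
    (hwhat_bdd : ∀ x a, δ ≤ what x a ∧ what x a ≤ M)
    (r₁ r₂ : ℝ)
    (hr₂ : ∀ᵐ ω ∂P, |what (X ω) (A ω) - w (X ω) (A ω)| ≤ r₂)
    (hr₁ : ∀ᵐ ω ∂P, |μ (X ω) (A ω) - μhat (X ω) (A ω)| ≤ r₁)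
    -- the fluctuation parameter and perturbed outcome model
    (εhat : ℝ) (μt : (Fin d → ℝ) → ℝ → ℝ)
    (hμt : ∀ x a, μt x a = Function.invFun g (g (μhat x a) + εhat * what x a))
    -- all displayed expectations are finite
    (hμAtil_int : Integrable (fun ω => μ (X ω) (Atil ω)) P)
    (hμtAtil_int : Integrable (fun ω => μt (X ω) (Atil ω)) P)
    (hres_int : Integrable (fun ω => what (X ω) (A ω) * (Y ω - μt (X ω) (A ω))) P)
    (hres_int' : Integrable (fun ω => what (X ω) (A ω) * (Y ω - μhat (X ω) (A ω))) P)
    (hres_int'' : Integrable (fun ω =>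
      what (X ω) (A ω) * (μ (X ω) (A ω) - μt (X ω) (A ω))) P)
    (hres_int''' : Integrable (fun ω =>
      what (X ω) (A ω) * (μ (X ω) (A ω) - μhat (X ω) (A ω))) P)
    (hres_int'''' : Integrable (fun ω =>
      w (X ω) (A ω) * (μ (X ω) (A ω) - μt (X ω) (A ω))) P)
    (hprod_int : Integrable (fun ω =>
      (what (X ω) (A ω) - w (X ω) (A ω)) * (μ (X ω) (A ω) - μt (X ω) (A ω))) P)
    -- sample points and the first-order condition
    {n : ℕ} (hn : 1 ≤ n)
    (x : Fin n → (Fin d → ℝ)) (a ta y : Fin n → ℝ)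
    (hfoc : (1 / n : ℝ) * ∑ i : Fin n, what (x i) (a i) * (y i - μt (x i) (a i)) = 0)
    -- the plugin estimator, the estimand and the empirical-process terms
    (ψhat ψ D₁ D₂ : ℝ)
    (hψhat : ψhat = (1 / n : ℝ) * ∑ i : Fin n, μt (x i) (ta i))
    (hψ : ψ = ∫ ω, μ (X ω) (Atil ω) ∂P)
    (hD₁ : D₁ = (1 / n : ℝ) * ∑ i : Fin n,
        (μt (x i) (ta i) + what (x i) (a i) * (y i - μt (x i) (a i)))
      - ∫ ω, (μt (X ω) (Atil ω) + what (X ω) (A ω) * (Y ω - μt (X ω) (A ω))) ∂P)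
    (hD₂ : D₂ = (1 / n : ℝ) * ∑ i : Fin n, what (x i) (a i) * (y i - μhat (x i) (a i))
      - ∫ ω, what (X ω) (A ω) * (Y ω - μhat (X ω) (A ω)) ∂P) :
    |ψhat - ψ| ≤ |D₁| + r₁ * r₂ + (C * M * r₂ / (c₀ * δ ^ 2)) * (|D₂| + M * r₁) :=
  targeted_regularization_error_bound_general P X A Atil Y hX hA hAtil hYint μ hμ hμver κ ν hκ hν w
    hw hwnn hac g hg_bij hg_C1 h' hh c₀ C hc₀ hh' μhat what hμhat_meas hwhat_meas δ M hδ hwhat_bdd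
    r₁ r₂ hr₂ hr₁ εhat μt hμt hμAtil_int hμtAtil_int hres_int hres_int' hres_int'' hres_int'''' hn x
    a ta y hfoc ψhat ψ D₁ D₂ hψhat hψ hD₁ hD₂
end
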